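/- arXiv:0902.1919 — 6 statements merged into one kernel-verified Lean document; each statement's English description precedes it below -/
import Mathlib

section
/- Let R > 0, δ > 0 and k > 2. Define χ : [R, 2kR] → ℝ by χ(x) = (x − R)/R for x ∈ [R, 2R], χ(x) = 1 for x ∈ [2R, kR], and χ(x) = −(x − 2kR)/(kR) for x ∈ [kR, 2kR], and set φ(x) = χ(x)·x^{1/2}. Then ∫_R^{2kR} ( |φ'(x)|² − (1 + δ)·φ(x)²/(4x²) ) dx ≤ 3 − (δ/4)·log(k/2), where φ' denotes the derivative of φ (which exists at every point of [R, 2kR] except the finitely many break points 2R and kR, so the integral is well defined). -/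
/-!
Writing `φ = χ √x` with `χ` affine of slope `m` on a piece, one has
`φ'² - (1+δ) φ²/(4x²) = m² x + χ χ' - (δ/4) χ²/x`. Over the whole interval the middle term
integrates to `[χ²/2] = 0`, the first gives `3/2` on each of the two ramps, and the last is at most
`-(δ/4) ∫_{2R}^{kR} dx/x = -(δ/4) log(k/2)` since `χ = 1` there.
-/

open Set Real MeasureTheory intervalIntegral

lemma sq_slope_mul_sqrt_add_sub_hardy {x m u δ : ℝ} (hx : 0 < x) :
    (m * √x + u / (2 * √x)) ^ 2 - (1 + δ) * (u * √x) ^ 2 / (4 * x ^ 2)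
      = m ^ 2 * x + u * m - δ / 4 * (u ^ 2 / x) := by
  obtain ⟨s, hs, rfl⟩ : ∃ s, 0 < s ∧ x = s ^ 2 := ⟨√x, sqrt_pos.2 hx, (sq_sqrt hx.le).symm⟩
  rw [sqrt_sq hs.le]
  field_simp
  ring

lemma hasDerivAt_affine_mul_sqrt {x : ℝ} (m c : ℝ) (hx : 0 < x) :
    HasDerivAt (fun y => (m * y + c) * √y) (m * √x + (m * x + c) / (2 * √x)) x :=
  ((((hasDerivAt_id' x).const_mul m).add_const c).fun_mul (hasDerivAt_sqrt hx.ne')).congr_deriv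
    (by ring)

lemma intervalIntegrable_and_integral_hardy_of_affine {φ : ℝ → ℝ} {a b m c δ : ℝ}
    (ha : 0 < a) (hab : a ≤ b) (hφ : ∀ x ∈ Ioo a b, φ x = (m * x + c) * √x) :
    IntervalIntegrable (fun x => deriv φ x ^ 2 - (1 + δ) * φ x ^ 2 / (4 * x ^ 2)) volume a b ∧
      ∫ x in a..b, (deriv φ x ^ 2 - (1 + δ) * φ x ^ 2 / (4 * x ^ 2))
        = (m ^ 2 * b ^ 2 + (m * b + c) ^ 2) / 2 - (m ^ 2 * a ^ 2 + (m * a + c) ^ 2) / 2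
          - δ / 4 * ∫ x in a..b, (m * x + c) ^ 2 / x := by
  have hpos : ∀ x ∈ Icc a b, 0 < x := fun x hx => ha.trans_le hx.1
  have heq : EqOn (fun x => deriv φ x ^ 2 - (1 + δ) * φ x ^ 2 / (4 * x ^ 2))
      (fun x => (m ^ 2 * x + (m * x + c) * m) - δ / 4 * ((m * x + c) ^ 2 / x)) (Ioo a b) := by
    intro x hx
    have hx0 := hpos x (Ioo_subset_Icc_self hx)
    have hderiv : deriv φ x = m * √x + (m * x + c) / (2 * √x) := by
      have hφx : φ =ᶠ[nhds x] fun y => (m * y + c) * √y :=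
        Filter.eventually_of_mem (isOpen_Ioo.mem_nhds hx) hφ
      rw [hφx.deriv_eq, (hasDerivAt_affine_mul_sqrt m c hx0).deriv]
    simp only [hderiv, hφ x hx]
    exact sq_slope_mul_sqrt_add_sub_hardy hx0
  have hquot : ContinuousOn (fun x => (m * x + c) ^ 2 / x) (Icc a b) :=
    ContinuousOn.div (by fun_prop) (by fun_prop) fun x hx => (hpos x hx).ne'
  have hprimitive : ∀ x, HasDerivAt (fun x => (m ^ 2 * x ^ 2 + (m * x + c) ^ 2) / 2)
      (m ^ 2 * x + (m * x + c) * m) x := fun x =>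
    ((((hasDerivAt_pow 2 x).const_mul (m ^ 2)).fun_add
      ((((hasDerivAt_id' x).const_mul m).add_const c).fun_pow 2)).div_const 2).congr_deriv (by ring)
  refine ⟨(intervalIntegrable_congr_uIoo (by rwa [uIoo_of_le hab])).2
    (ContinuousOn.intervalIntegrable_of_Icc hab (by fun_prop)), ?_⟩
  rw [integral_congr_Ioo_of_le hab heq,
    intervalIntegral.integral_sub ((by fun_prop : Continuous _).intervalIntegrable _ _)
      ((hquot.intervalIntegrable_of_Icc hab).const_mul _),
    intervalIntegral.integral_const_mul,
    integral_eq_sub_of_hasDerivAt (fun x _ => hprimitive x)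
      ((by fun_prop : Continuous _).intervalIntegrable _ _)]

/-- Let `R > 0`, `δ > 0` and `k > 2`. Define the piecewise-linear cutoff
`χ` on `[R, 2kR]` (equal to `(x-R)/R` on `[R,2R]`, to `1` on `[2R,kR]`, and to
`-(x-2kR)/(kR)` on `[kR,2kR]`) and set `φ(x) = χ(x)·√x`. Then
`∫_R^{2kR} (|φ'|² - (1+δ)·φ²/(4x²)) dx ≤ 3 - (δ/4)·log(k/2)`. -/
theorem stmt_0 (R δ k : ℝ) (hR : 0 < R) (hδ : 0 < δ) (hk : 2 < k)
    (χ φ : ℝ → ℝ)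
    (hχ₁ : ∀ x ∈ Icc R (2 * R), χ x = (x - R) / R)
    (hχ₂ : ∀ x ∈ Icc (2 * R) (k * R), χ x = 1)
    (hχ₃ : ∀ x ∈ Icc (k * R) (2 * k * R), χ x = -(x - 2 * k * R) / (k * R))
    (hφ : ∀ x, φ x = χ x * Real.sqrt x) :
    (∫ x in R..(2 * k * R),
        ((deriv φ x) ^ 2 - (1 + δ) * (φ x) ^ 2 / (4 * x ^ 2)))
      ≤ 3 - (δ / 4) * Real.log (k / 2) := by
  have hkR : 0 < k * R := by positivity
  have hR₂ : R ≤ 2 * R := by linarith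
  have h₂k : 2 * R ≤ k * R := by nlinarith
  have hk₂ : k * R ≤ 2 * k * R := by nlinarith
  obtain ⟨hint₁, heq₁⟩ := intervalIntegrable_and_integral_hardy_of_affine (φ := φ) (δ := δ)
    (m := 1 / R) (c := -1) hR hR₂ fun x hx => by
      rw [hφ, hχ₁ x (Ioo_subset_Icc_self hx)]; field_simp; ring
  obtain ⟨hint₂, heq₂⟩ := intervalIntegrable_and_integral_hardy_of_affine (φ := φ) (δ := δ)
    (m := 0) (c := 1) (by positivity) h₂k fun x hx => by
      rw [hφ, hχ₂ x (Ioo_subset_Icc_self hx)]; ring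
  obtain ⟨hint₃, heq₃⟩ := intervalIntegrable_and_integral_hardy_of_affine (φ := φ) (δ := δ)
    (m := -1 / (k * R)) (c := 2) hkR hk₂ fun x hx => by
      rw [hφ, hχ₃ x (Ioo_subset_Icc_self hx)]; field_simp; ring
  have hlog : ∫ x in (2 * R)..(k * R), (0 * x + 1) ^ 2 / x = Real.log (k / 2) := by
    simp only [zero_mul, zero_add, one_pow]
    rw [integral_one_div_of_pos (by positivity) hkR, mul_div_mul_right _ _ hR.ne']
  have hnonneg {a b m c : ℝ} (ha : 0 < a) (hab : a ≤ b) :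
      0 ≤ ∫ x in a..b, (m * x + c) ^ 2 / x :=
    intervalIntegral.integral_nonneg hab fun x hx => by have := ha.trans_le hx.1; positivity
  rw [← integral_add_adjacent_intervals hint₁ (hint₂.trans hint₃),
    ← integral_add_adjacent_intervals hint₂ hint₃, heq₁, heq₂, heq₃, hlog]
  have hI₁ := mul_nonneg hδ.le (hnonneg (m := 1 / R) (c := -1) hR hR₂)
  have hI₃ := mul_nonneg hδ.le (hnonneg (m := -1 / (k * R)) (c := 2) hkR hk₂)
  generalize (∫ x in R..2 * R, (1 / R * x + -1) ^ 2 / x) = I₁ at hI₁ ⊢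
  generalize (∫ x in (k * R)..(2 * k * R), (-1 / (k * R) * x + 2) ^ 2 / x) = I₃ at hI₃ ⊢
  field_simp
  linarith
end

section
/- Let R > 0 and δ > 0, and let k > 2·exp(12/δ). Then there exists a Lipschitz function φ : [R, 2kR] → ℝ with φ(R) = φ(2kR) = 0, φ not identically zero, which is differentiable at all but finitely many points, such that ∫_R^{2kR} ( |φ'(x)|² − (1 + δ)·φ(x)²/(4x²) ) dx < 0. (By the mini-max principle this expresses that the first Dirichlet eigenvalue −λ₁ of the problem −φ'' − (1+δ)/(4x²)·φ = λφ on [R, 2kR] with φ(R) = φ(2kR) = 0 is negative.) -/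
/-!
Take `φ = √x` on `[2R, kR]`, joined linearly to `0` at `R` and at `2kR`. On the middle piece
the integrand is `1/(4x) - (1+δ)/(4x) = -δ/(4x)`, contributing `-(δ/4) log (k/2)`, while each
ramp contributes at most `∫ φ'²`, which is `2` and `1` respectively whatever the scale.
So the integral is at most `3 - (δ/4) log (k/2) < 0`.

Writing `2R = s²` and `kR = t²`, the function is the minimum of `√x` and the two lines; since
`(2/s) y² - s - y = (2y + s)(y - s)/s`, each line lies below `√x` exactly on its own side of
the junction, so the minimum picks the intended piece everywhere.
-/

open Set Real MeasureTheory intervalIntegral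

theorem LipschitzOnWith.min {α : Type*} [PseudoEMetricSpace α] {f g : α → ℝ} {Kf Kg : NNReal}
    {u : Set α} (hf : LipschitzOnWith Kf f u) (hg : LipschitzOnWith Kg g u) :
    LipschitzOnWith (max Kf Kg) (fun x => min (f x) (g x)) u :=
  lipschitzOnWith_iff_restrict.mpr (hf.to_restrict.min hg.to_restrict)

/-- `√x` on `[s², t²]`, continued by the segments joining it to `0` at `s² / 2` and at
`2 t²`. -/
noncomputable def rampedSqrt (s t x : ℝ) : ℝ :=
  min (min (2 / s * x - s) (2 * t - x / t)) √x

namespace rampedSqrt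

variable {s t x : ℝ}

theorem rise_sub_sqrt (hs : 0 < s) (hx : 0 ≤ x) :
    2 / s * x - s - √x = (2 * √x + s) * (√x - s) / s := by
  field_simp
  linear_combination (-2) * sq_sqrt hx

theorem fall_sub_sqrt (ht : 0 < t) (hx : 0 ≤ x) :
    2 * t - x / t - √x = (2 * t + √x) * (t - √x) / t := by
  field_simp
  linear_combination sq_sqrt hx

theorem rise_le_sqrt (hs : 0 < s) (hx : 0 ≤ x) (hxs : x ≤ s ^ 2) : 2 / s * x - s ≤ √x := by
  have hsx : √x - s ≤ 0 := sub_nonpos.mpr ((sqrt_le_left hs.le).mpr hxs)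
  rw [← sub_nonpos, rise_sub_sqrt hs hx]
  exact div_nonpos_of_nonpos_of_nonneg (mul_nonpos_of_nonneg_of_nonpos (by positivity) hsx) hs.le

theorem sqrt_le_rise (hs : 0 < s) (hxs : s ^ 2 ≤ x) : √x ≤ 2 / s * x - s := by
  have hsx : 0 ≤ √x - s := sub_nonneg.mpr ((le_sqrt' hs).mpr hxs)
  rw [← sub_nonneg, rise_sub_sqrt hs ((sq_nonneg s).trans hxs)]
  positivity

theorem sqrt_le_fall (ht : 0 < t) (hx : 0 ≤ x) (hxt : x ≤ t ^ 2) : √x ≤ 2 * t - x / t := by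
  have htx : 0 ≤ t - √x := sub_nonneg.mpr ((sqrt_le_left ht.le).mpr hxt)
  rw [← sub_nonneg, fall_sub_sqrt ht hx]
  positivity

theorem fall_le_sqrt (ht : 0 < t) (hxt : t ^ 2 ≤ x) : 2 * t - x / t ≤ √x := by
  have htx : t - √x ≤ 0 := sub_nonpos.mpr ((le_sqrt' ht).mpr hxt)
  rw [← sub_nonpos, fall_sub_sqrt ht ((sq_nonneg t).trans hxt)]
  exact div_nonpos_of_nonpos_of_nonneg (mul_nonpos_of_nonneg_of_nonpos (by positivity) htx) ht.le

theorem continuous : Continuous (rampedSqrt s t) := by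
  unfold rampedSqrt; fun_prop

theorem exists_lipschitzOnWith {a b : ℝ} (ha : 0 < a) :
    ∃ C, LipschitzOnWith C (rampedSqrt s t) (Icc a b) := by
  have lip {f : ℝ → ℝ} (hf : ContDiffOn ℝ 1 f (Icc a b)) :
      ∃ C, LipschitzOnWith C f (Icc a b) :=
    hf.exists_lipschitzOnWith one_ne_zero (convex_Icc a b) isCompact_Icc
  obtain ⟨C₁, h₁⟩ := lip (f := fun x => 2 / s * x - s) (by fun_prop)
  obtain ⟨C₂, h₂⟩ := lip (f := fun x => 2 * t - x / t) (by fun_prop)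
  obtain ⟨C₃, h₃⟩ := lip (f := (√·)) fun x hx =>
    (contDiffAt_sqrt (ha.trans_le hx.1).ne').contDiffWithinAt
  exact ⟨_, (h₁.min h₂).min h₃⟩

theorem eqOn_rise (hs : 0 < s) (hst : s ≤ t) :
    EqOn (rampedSqrt s t) (fun x => 2 / s * x - s) (Icc 0 (s ^ 2)) := by
  intro x ⟨hx, hxs⟩
  have hxt : x ≤ t ^ 2 := hxs.trans (pow_le_pow_left₀ hs.le hst 2)
  have hr := rise_le_sqrt hs hx hxs
  have hf := sqrt_le_fall (hs.trans_le hst) hx hxt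
  simp only [rampedSqrt]
  rw [min_eq_left (hr.trans hf), min_eq_left hr]

theorem eqOn_sqrt (hs : 0 < s) (hst : s ≤ t) :
    EqOn (rampedSqrt s t) (√·) (Icc (s ^ 2) (t ^ 2)) := by
  intro x ⟨hsx, hxt⟩
  have hr := sqrt_le_rise hs hsx
  have hf := sqrt_le_fall (hs.trans_le hst) ((sq_nonneg s).trans hsx) hxt
  simp only [rampedSqrt]
  exact min_eq_right (le_min hr hf)

theorem eqOn_fall (hs : 0 < s) (hst : s ≤ t) :
    EqOn (rampedSqrt s t) (fun x => 2 * t - x / t) (Ici (t ^ 2)) := by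
  intro x (htx : t ^ 2 ≤ x)
  have hf := fall_le_sqrt (hs.trans_le hst) htx
  have hr := sqrt_le_rise hs ((pow_le_pow_left₀ hs.le hst 2).trans htx)
  simp only [rampedSqrt]
  rw [min_eq_right (hf.trans hr), min_eq_left hf]

theorem apply_sq_div_two (hs : 0 < s) (hst : s ≤ t) : rampedSqrt s t (s ^ 2 / 2) = 0 := by
  rw [eqOn_rise hs hst ⟨by positivity, half_le_self (sq_nonneg s)⟩]
  field_simp
  ring

theorem apply_sq (hs : 0 < s) (hst : s ≤ t) : rampedSqrt s t (t ^ 2) = t := by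
  rw [eqOn_fall hs hst (le_refl (t ^ 2))]
  field_simp
  ring

theorem apply_two_mul_sq (hs : 0 < s) (hst : s ≤ t) : rampedSqrt s t (2 * t ^ 2) = 0 := by
  rw [eqOn_fall hs hst (le_mul_of_one_le_left (sq_nonneg t) one_le_two)]
  field_simp
  ring

theorem hasDerivAt_of_lt (hs : 0 < s) (hst : s ≤ t) (hx : x ∈ Ioo 0 (s ^ 2)) :
    HasDerivAt (rampedSqrt s t) (2 / s) x := by
  have h : HasDerivAt (fun x => 2 / s * x - s) (2 / s) x := by
    simpa using ((hasDerivAt_id x).const_mul (2 / s)).sub_const s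
  exact h.congr_of_eventuallyEq
    ((eqOn_rise hs hst).eventuallyEq_of_mem (Icc_mem_nhds hx.1 hx.2))

theorem hasDerivAt_of_mem_Ioo (hs : 0 < s) (hst : s ≤ t) (hx : x ∈ Ioo (s ^ 2) (t ^ 2)) :
    HasDerivAt (rampedSqrt s t) (1 / (2 * √x)) x :=
  (hasDerivAt_sqrt ((sq_nonneg s).trans_lt hx.1).ne').congr_of_eventuallyEq
    ((eqOn_sqrt hs hst).eventuallyEq_of_mem (Icc_mem_nhds hx.1 hx.2))

theorem hasDerivAt_of_gt (hs : 0 < s) (hst : s ≤ t) (hx : t ^ 2 < x) :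
    HasDerivAt (rampedSqrt s t) (-(1 / t)) x := by
  have h : HasDerivAt (fun x => 2 * t - x / t) (-(1 / t)) x :=
    ((hasDerivAt_id x).div_const t).const_sub (2 * t)
  exact h.congr_of_eventuallyEq
    ((eqOn_fall hs hst).eventuallyEq_of_mem (Ici_mem_nhds hx))

theorem differentiableAt (hs : 0 < s) (hst : s ≤ t) (hx : 0 < x)
    (hxs : x ≠ s ^ 2) (hxt : x ≠ t ^ 2) :
    DifferentiableAt ℝ (rampedSqrt s t) x := by
  rcases hxs.lt_or_gt with hxs | hxs
  · exact (hasDerivAt_of_lt hs hst ⟨hx, hxs⟩).differentiableAt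
  rcases hxt.lt_or_gt with hxt | hxt
  · exact (hasDerivAt_of_mem_Ioo hs hst ⟨hxs, hxt⟩).differentiableAt
  · exact (hasDerivAt_of_gt hs hst hxt).differentiableAt

end rampedSqrt

/-- The integrand of the quadratic form of `-d²/dx² - c / (4 x²)`. -/
noncomputable def hardyIntegrand (c : ℝ) (φ : ℝ → ℝ) (x : ℝ) : ℝ :=
  deriv φ x ^ 2 - c * φ x ^ 2 / (4 * x ^ 2)

section HardyIntegrand

variable {c a b m : ℝ} {φ : ℝ → ℝ}

theorem hardyIntegrand_eqOn_of_hasDerivAt (hd : ∀ x ∈ Ioo a b, HasDerivAt φ m x) :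
    EqOn (hardyIntegrand c φ) (fun x => m ^ 2 - c * φ x ^ 2 / (4 * x ^ 2)) (Ioo a b) :=
  fun x hx => by simp only [hardyIntegrand, (hd x hx).deriv]

theorem intervalIntegrable_hardyIntegrand_of_hasDerivAt (ha : 0 < a) (hab : a ≤ b)
    (hφ : ContinuousOn φ (Icc a b)) (hd : ∀ x ∈ Ioo a b, HasDerivAt φ m x) :
    IntervalIntegrable (hardyIntegrand c φ) volume a b := by
  refine ContinuousOn.intervalIntegrable ?_ |>.congr_uIoo
    (uIoo_of_le hab ▸ (hardyIntegrand_eqOn_of_hasDerivAt hd).symm)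
  rw [uIcc_of_le hab]
  refine continuousOn_const.sub ((continuousOn_const.mul (hφ.pow 2)).div (by fun_prop) ?_)
  intro x hx
  have : 0 < x := ha.trans_le hx.1
  positivity

theorem integral_hardyIntegrand_le_of_hasDerivAt (hc : 0 ≤ c) (ha : 0 < a) (hab : a ≤ b)
    (hφ : ContinuousOn φ (Icc a b)) (hd : ∀ x ∈ Ioo a b, HasDerivAt φ m x) :
    ∫ x in a..b, hardyIntegrand c φ x ≤ m ^ 2 * (b - a) := by
  calc ∫ x in a..b, hardyIntegrand c φ x ≤ ∫ _ in a..b, m ^ 2 := by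
        refine integral_mono_on_of_le_Ioo hab
          (intervalIntegrable_hardyIntegrand_of_hasDerivAt ha hab hφ hd) intervalIntegrable_const
          fun x hx => ?_
        rw [hardyIntegrand_eqOn_of_hasDerivAt hd hx]
        exact sub_le_self _ (by positivity)
    _ = m ^ 2 * (b - a) := by rw [intervalIntegral.integral_const, smul_eq_mul, mul_comm]

theorem hardyIntegrand_eqOn_of_eqOn_sqrt (ha : 0 ≤ a) (h : EqOn φ (√·) (Ioo a b)) :
    EqOn (hardyIntegrand c φ) (fun x => (1 - c) / 4 * x⁻¹) (Ioo a b) := by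
  intro x hx
  have hx0 : 0 < x := ha.trans_lt hx.1
  have hd : deriv φ x = 1 / (2 * √x) :=
    ((hasDerivAt_sqrt hx0.ne').congr_of_eventuallyEq
      (h.eventuallyEq_of_mem (Ioo_mem_nhds hx.1 hx.2))).deriv
  simp only [hardyIntegrand, hd, h hx, div_pow, mul_pow, sq_sqrt hx0.le]
  field_simp
  ring

theorem intervalIntegrable_hardyIntegrand_of_eqOn_sqrt (ha : 0 < a) (hab : a ≤ b)
    (h : EqOn φ (√·) (Ioo a b)) : IntervalIntegrable (hardyIntegrand c φ) volume a b := by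
  refine ContinuousOn.intervalIntegrable ?_ |>.congr_uIoo
    (uIoo_of_le hab ▸ (hardyIntegrand_eqOn_of_eqOn_sqrt ha.le h).symm)
  rw [uIcc_of_le hab]
  exact continuousOn_const.mul (continuousOn_inv₀.mono fun x hx => (ha.trans_le hx.1).ne')

theorem integral_hardyIntegrand_of_eqOn_sqrt (ha : 0 < a) (hab : a ≤ b)
    (h : EqOn φ (√·) (Ioo a b)) :
    ∫ x in a..b, hardyIntegrand c φ x = (1 - c) / 4 * log (b / a) := by
  rw [integral_congr_Ioo_of_le hab (hardyIntegrand_eqOn_of_eqOn_sqrt ha.le h),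
    intervalIntegral.integral_const_mul, integral_inv]
  rw [uIcc_of_le hab]
  exact fun h0 => h0.1.not_gt ha

end HardyIntegrand

theorem integral_hardyIntegrand_rampedSqrt_le {c s t : ℝ} (hc : 0 ≤ c) (hs : 0 < s)
    (hst : s ≤ t) :
    ∫ x in s ^ 2 / 2..2 * t ^ 2, hardyIntegrand c (rampedSqrt s t) x ≤
      3 + (1 - c) / 4 * log (t ^ 2 / s ^ 2) := by
  have ht : 0 < t := hs.trans_le hst
  have h₀ : 0 < s ^ 2 / 2 := by positivity
  have h₀' : 0 < t ^ 2 := by positivity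
  have h₁ : s ^ 2 / 2 ≤ s ^ 2 := half_le_self (sq_nonneg s)
  have h₂ : s ^ 2 ≤ t ^ 2 := pow_le_pow_left₀ hs.le hst 2
  have h₃ : t ^ 2 ≤ 2 * t ^ 2 := le_mul_of_one_le_left (sq_nonneg t) one_le_two
  have hφ : Continuous (rampedSqrt s t) := rampedSqrt.continuous
  have hrise (x) (hx : x ∈ Ioo (s ^ 2 / 2) (s ^ 2)) : HasDerivAt (rampedSqrt s t) (2 / s) x :=
    rampedSqrt.hasDerivAt_of_lt hs hst ⟨h₀.trans hx.1, hx.2⟩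
  have hsqrt : EqOn (rampedSqrt s t) (√·) (Ioo (s ^ 2) (t ^ 2)) :=
    (rampedSqrt.eqOn_sqrt hs hst).mono Ioo_subset_Icc_self
  have hfall (x) (hx : x ∈ Ioo (t ^ 2) (2 * t ^ 2)) :
      HasDerivAt (rampedSqrt s t) (-(1 / t)) x :=
    rampedSqrt.hasDerivAt_of_gt hs hst hx.1
  have i₁ := intervalIntegrable_hardyIntegrand_of_hasDerivAt (c := c) h₀ h₁ hφ.continuousOn hrise
  have i₂ := intervalIntegrable_hardyIntegrand_of_eqOn_sqrt (c := c) (h₀.trans_le h₁) h₂ hsqrt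
  have i₃ := intervalIntegrable_hardyIntegrand_of_hasDerivAt (c := c) h₀' h₃ hφ.continuousOn hfall
  have e₁ : ∫ x in s ^ 2 / 2..s ^ 2, hardyIntegrand c (rampedSqrt s t) x ≤ 2 := by
    refine (integral_hardyIntegrand_le_of_hasDerivAt hc h₀ h₁ hφ.continuousOn hrise).trans_eq ?_
    field_simp
    ring
  have e₂ := integral_hardyIntegrand_of_eqOn_sqrt (c := c) (h₀.trans_le h₁) h₂ hsqrt
  have e₃ : ∫ x in t ^ 2..2 * t ^ 2, hardyIntegrand c (rampedSqrt s t) x ≤ 1 := by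
    refine (integral_hardyIntegrand_le_of_hasDerivAt hc h₀' h₃ hφ.continuousOn hfall).trans_eq ?_
    field_simp
    ring
  rw [← integral_add_adjacent_intervals (i₁.trans i₂) i₃,
    ← integral_add_adjacent_intervals i₁ i₂]
  linarith

/-- Let `R > 0`, `δ > 0` and `k > 2·exp(12/δ)`. Then there is a Lipschitz
function `φ` on `[R, 2kR]`, vanishing at both endpoints, not identically zero, and
differentiable off a finite set, whose Hardy-type Rayleigh integrand has negative integral:
`∫_R^{2kR} (|φ'|² - (1+δ)·φ²/(4x²)) dx < 0`. By the mini-max principle this expresses that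
the first Dirichlet eigenvalue of `-d²/dx² - (1+δ)/(4x²)` on `[R, 2kR]` is negative. -/
theorem stmt_1 (R δ k : ℝ) (hR : 0 < R) (hδ : 0 < δ)
    (hk : 2 * Real.exp (12 / δ) < k) :
    ∃ φ : ℝ → ℝ, ∃ C : NNReal,
      LipschitzOnWith C φ (Icc R (2 * k * R)) ∧
      φ R = 0 ∧ φ (2 * k * R) = 0 ∧
      (∃ x ∈ Icc R (2 * k * R), φ x ≠ 0) ∧
      (∃ s : Finset ℝ, ∀ x ∈ Icc R (2 * k * R), x ∉ s → DifferentiableAt ℝ φ x) ∧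
      (∫ x in R..(2 * k * R),
          ((deriv φ x) ^ 2 - (1 + δ) * (φ x) ^ 2 / (4 * x ^ 2))) < 0 := by
  have hlog : 12 / δ < log (k / 2) := by
    rw [lt_log_iff_exp_lt (by linarith [exp_pos (12 / δ)])]
    linarith
  have hk₂ : 2 ≤ k := by
    linarith [one_lt_exp_iff.mpr (div_pos (by norm_num : (0 : ℝ) < 12) hδ)]
  obtain ⟨s, hs, rfl⟩ : ∃ s, 0 < s ∧ R = s ^ 2 / 2 :=
    ⟨√(2 * R), sqrt_pos.mpr (by linarith), by rw [sq_sqrt (by linarith)]; ring⟩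
  obtain ⟨t, ht, hts⟩ : ∃ t, 0 < t ∧ t ^ 2 = k / 2 * s ^ 2 :=
    ⟨s * √(k / 2), mul_pos hs (sqrt_pos.mpr (by linarith)),
      by rw [mul_pow, sq_sqrt (by linarith)]; ring⟩
  have hst : s ≤ t := pow_le_pow_iff_left₀ hs.le ht.le two_ne_zero |>.mp (by nlinarith)
  rw [show 2 * k * (s ^ 2 / 2) = 2 * t ^ 2 by rw [hts]; ring]
  obtain ⟨C, hC⟩ := rampedSqrt.exists_lipschitzOnWith (s := s) (t := t) (b := 2 * t ^ 2) hR
  refine ⟨rampedSqrt s t, C, hC, rampedSqrt.apply_sq_div_two hs hst,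
    rampedSqrt.apply_two_mul_sq hs hst, ⟨t ^ 2, ⟨by nlinarith, by nlinarith⟩, ?_⟩,
    ⟨{s ^ 2, t ^ 2}, fun x hx hxs => ?_⟩, ?_⟩
  · exact (rampedSqrt.apply_sq hs hst).trans_ne ht.ne'
  · simp only [Finset.mem_insert, Finset.mem_singleton, not_or] at hxs
    exact rampedSqrt.differentiableAt hs hst (hR.trans_le hx.1) hxs.1 hxs.2
  · calc _ ≤ 3 + (1 - (1 + δ)) / 4 * log (t ^ 2 / s ^ 2) :=
          integral_hardyIntegrand_rampedSqrt_le (by linarith) hs hst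
      _ < 0 := by
        rw [hts, mul_div_cancel_right₀ _ (by positivity)]
        have := (div_lt_iff₀ hδ).mp hlog
        linarith
end

section
/- Let κ > 0, β > 0 and R₁ > 0 with R₁² ≥ β/κ. Let R_min : [0, ∞) → ℝ be a continuous function with R_min(t) ≤ 0 for all t ≥ 0 and R_min(t) = −κ + β/t² for all t ≥ R₁. Let J : [0, ∞) → ℝ be the C² solution of the Jacobi equation J''(t) + R_min(t)·J(t) = 0 with J(0) = 0, J'(0) = 1, and set S(t) = J'(t)/J(t) for t > 0. Then S has the asymptotic expansion S(t) = √κ − β/(2√κ·t²) + O(1/t³) as t → ∞; that is, there exist constants C > 0 and T ≥ R₁ such that | S(t) − √κ + β/(2√κ·t²) | ≤ C/t³ for all t ≥ T. -/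
/-!
Since `R_min ≤ 0`, the functions `J J'` and `J'²` are nondecreasing (their derivatives are
`J'² - R_min J²` and `-2 R_min J J'`), so `J' ≥ 1` and `J t ≥ t`. Hence `S = J'/J` is positive and
solves the Riccati equation `S' = κ - β/t² - S²` on `[R₁, ∞)`.

The expansion comes from comparison with barriers: a strict supersolution (subsolution) of the
Riccati equation lying above (below) `S` at some point stays so afterwards. The barriers
`√κ + M/t` and `√κ - √κ T/t` first give `|S - √κ| ≤ L/t`. From a large starting point `T`,
the barriers `√κ - a/t² ± K T²/t³` with `a = β/(2√κ)` then enclose `S`: at `t = T` the cubic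
term is `K/T`, which absorbs the initial gap `O(1/T)`, while `K T² = o(T³)` keeps the barrier
inequalities strict.
-/

open Set Real Filter Topology

theorem monotoneOn_Ici_of_hasDerivWithinAt_nonneg {f f' : ℝ → ℝ} {a : ℝ}
    (hf : ∀ x ∈ Ici a, HasDerivWithinAt f (f' x) (Ici a) x) (hf' : ∀ x ∈ Ioi a, 0 ≤ f' x) :
    MonotoneOn f (Ici a) := by
  refine monotoneOn_of_hasDerivWithinAt_nonneg (convex_Ici a)
    (fun x hx => (hf x hx).continuousWithinAt) ?_ (by rwa [interior_Ici])
  rw [interior_Ici]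
  exact fun x hx => (hf x (mem_Ici_of_Ioi hx)).mono Ioi_subset_Ici_self

theorem hasDerivAt_const_div_pow (c : ℝ) (n : ℕ) {x : ℝ} (hx : x ≠ 0) :
    HasDerivAt (fun y => c / y ^ n) (-(n * c / x ^ (n + 1))) x := by
  refine ((hasDerivAt_const x c).div (hasDerivAt_pow n x) (pow_ne_zero n hx)).congr_deriv ?_
  rcases n with _ | n
  · simp
  · field_simp; push_cast; ring

section Jacobi

variable {R J J' J'' : ℝ → ℝ}

theorem one_le_deriv_of_jacobi (hR : ∀ t ∈ Ici (0 : ℝ), R t ≤ 0)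
    (hJ : ∀ t ∈ Ici (0 : ℝ), HasDerivWithinAt J (J' t) (Ici 0) t)
    (hJ' : ∀ t ∈ Ici (0 : ℝ), HasDerivWithinAt J' (J'' t) (Ici 0) t)
    (hODE : ∀ t ∈ Ici (0 : ℝ), J'' t + R t * J t = 0) (hJ0 : J 0 = 0) (hJ'0 : J' 0 = 1) :
    ∀ t ∈ Ici (0 : ℝ), 1 ≤ J' t := by
  -- `(J J')' = J'² - R J² ≥ 0`, and then `(J'²)' = -2 R J J' ≥ 0`; the sign of `J'` cannot flip.
  have hJJ' : ∀ t ∈ Ici (0 : ℝ), 0 ≤ J t * J' t := by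
    have hmono : MonotoneOn (fun t => J t * J' t) (Ici 0) :=
      monotoneOn_Ici_of_hasDerivWithinAt_nonneg (fun t ht => (hJ t ht).mul (hJ' t ht))
        fun t ht => by
          rw [eq_neg_of_add_eq_zero_left (hODE t (mem_Ici_of_Ioi ht))]
          nlinarith [mul_nonneg (neg_nonneg.2 (hR t (mem_Ici_of_Ioi ht))) (mul_self_nonneg (J t)),
            mul_self_nonneg (J' t)]
    intro t ht
    simpa [hJ0] using hmono self_mem_Ici ht ht
  have hsq : ∀ t ∈ Ici (0 : ℝ), 1 ≤ J' t ^ 2 := by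
    have hmono : MonotoneOn (fun t => J' t ^ 2) (Ici 0) :=
      monotoneOn_Ici_of_hasDerivWithinAt_nonneg (fun t ht => (hJ' t ht).pow 2)
        fun t ht => by
          rw [eq_neg_of_add_eq_zero_left (hODE t (mem_Ici_of_Ioi ht))]
          simp only [Nat.cast_ofNat, Nat.add_one_sub_one, pow_one]
          nlinarith [mul_nonneg (neg_nonneg.2 (hR t (mem_Ici_of_Ioi ht)))
            (hJJ' t (mem_Ici_of_Ioi ht))]
    intro t ht
    simpa [hJ'0] using hmono self_mem_Ici ht ht
  intro t ht
  by_contra! hlt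
  have hneg : J' t ≤ 0 := by nlinarith [hsq t ht]
  have hcont : ContinuousOn J' (Icc 0 t) := fun s hs =>
    (hJ' s hs.1).continuousWithinAt.mono Icc_subset_Ici_self
  obtain ⟨s, hs, hs0⟩ := intermediate_value_Icc' (mem_Ici.1 ht) hcont ⟨hneg, hJ'0 ▸ zero_le_one⟩
  have h := hsq s hs.1
  rw [hs0] at h
  norm_num at h

theorem self_le_of_jacobi (hR : ∀ t ∈ Ici (0 : ℝ), R t ≤ 0)
    (hJ : ∀ t ∈ Ici (0 : ℝ), HasDerivWithinAt J (J' t) (Ici 0) t)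
    (hJ' : ∀ t ∈ Ici (0 : ℝ), HasDerivWithinAt J' (J'' t) (Ici 0) t)
    (hODE : ∀ t ∈ Ici (0 : ℝ), J'' t + R t * J t = 0) (hJ0 : J 0 = 0) (hJ'0 : J' 0 = 1) :
    ∀ t ∈ Ici (0 : ℝ), t ≤ J t := by
  have hmono : MonotoneOn (fun t => J t - t) (Ici 0) :=
    monotoneOn_Ici_of_hasDerivWithinAt_nonneg (fun t ht => (hJ t ht).sub (hasDerivWithinAt_id t _))
      fun t ht => sub_nonneg.2 <|
        one_le_deriv_of_jacobi hR hJ hJ' hODE hJ0 hJ'0 t (mem_Ici_of_Ioi ht)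
  intro t ht
  simpa [hJ0] using hmono self_mem_Ici ht ht

end Jacobi

theorem hasDerivAt_riccati_of_jacobi {J J' S : ℝ → ℝ} {x R J'' : ℝ}
    (hJ : HasDerivAt J (J' x) x) (hJ' : HasDerivAt J' J'' x) (hODE : J'' + R * J x = 0)
    (hx : J x ≠ 0) (hS : S =ᶠ[𝓝 x] fun y => J' y / J y) :
    HasDerivAt S (-R - S x ^ 2) x := by
  refine ((hJ'.div hJ hx).congr_of_eventuallyEq hS).congr_deriv ?_
  rw [hS.eq_of_nhds]
  field_simp
  linear_combination J x * hODE

theorem image_le_of_deriv_lt_deriv_boundary_Ici {f f' g g' : ℝ → ℝ} {a : ℝ}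
    (hf : ∀ x ∈ Ici a, HasDerivAt f (f' x) x) (hg : ∀ x ∈ Ici a, HasDerivAt g (g' x) x)
    (ha : f a ≤ g a) (hlt : ∀ x ∈ Ici a, f x = g x → f' x < g' x) :
    ∀ x ∈ Ici a, f x ≤ g x := fun _ hb =>
  image_le_of_deriv_right_lt_deriv_boundary'
    (fun x hx => (hf x hx.1).continuousAt.continuousWithinAt)
    (fun x hx => (hf x hx.1).hasDerivWithinAt) ha
    (fun x hx => (hg x hx.1).continuousAt.continuousWithinAt)
    (fun x hx => (hg x hx.1).hasDerivWithinAt) (fun x hx => hlt x hx.1) ⟨hb, le_rfl⟩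

section Riccati

variable {q S g g' : ℝ → ℝ} {a : ℝ}

theorem riccati_le_of_supersolution (hS : ∀ x ∈ Ici a, HasDerivAt S (q x - S x ^ 2) x)
    (hg : ∀ x ∈ Ici a, HasDerivAt g (g' x) x) (hsup : ∀ x ∈ Ici a, q x - g x ^ 2 < g' x)
    (ha : S a ≤ g a) : ∀ x ∈ Ici a, S x ≤ g x :=
  image_le_of_deriv_lt_deriv_boundary_Ici hS hg ha fun x hx hx' => hx' ▸ hsup x hx

theorem riccati_ge_of_subsolution (hS : ∀ x ∈ Ici a, HasDerivAt S (q x - S x ^ 2) x)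
    (hg : ∀ x ∈ Ici a, HasDerivAt g (g' x) x) (hsub : ∀ x ∈ Ici a, g' x < q x - g x ^ 2)
    (ha : g a ≤ S a) : ∀ x ∈ Ici a, g x ≤ S x :=
  image_le_of_deriv_lt_deriv_boundary_Ici hg hS ha fun x hx hx' => hx' ▸ hsub x hx

end Riccati

section InverseSquarePotential

variable {S : ℝ → ℝ} {r β a : ℝ}

theorem exists_riccati_le_add_div (hS : ∀ x ∈ Ici a, HasDerivAt S (r ^ 2 - β / x ^ 2 - S x ^ 2) x)
    (hr : 0 < r) (hβ : 0 ≤ β) (ha : 0 < a) : ∃ M, ∀ x ∈ Ici a, S x ≤ r + M / x := by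
  set M := max 1 (a * S a)
  have hM : 1 ≤ M := le_max_left _ _
  refine ⟨M, riccati_le_of_supersolution (g' := fun x => -(M / x ^ 2)) hS
    (fun x hx => by simpa using (hasDerivAt_const_div_pow M 1 (ha.trans_le hx).ne').const_add r)
    (fun x hx => ?_) ?_⟩
  · have hx0 : 0 < x := ha.trans_le hx
    have key : -(M / x ^ 2) - (r ^ 2 - β / x ^ 2 - (r + M / x) ^ 2)
        = (2 * r * M * x + M * (M - 1) + β) / x ^ 2 := by field_simp; ring
    rw [← sub_pos, key]
    apply div_pos _ (by positivity)
    nlinarith [mul_pos (mul_pos hr (by linarith : (0:ℝ) < M)) hx0]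
  · have : S a ≤ M / a := by rw [le_div_iff₀ ha, mul_comm]; exact le_max_right _ _
    linarith

theorem exists_sub_div_le_riccati (hS : ∀ x ∈ Ici a, HasDerivAt S (r ^ 2 - β / x ^ 2 - S x ^ 2) x)
    (hS0 : ∀ x ∈ Ici a, 0 ≤ S x) (hr : 0 < r) (hβ : 0 ≤ β) (ha : 0 < a) :
    ∃ T ≥ a, ∀ x ∈ Ici T, r - r * T / x ≤ S x := by
  set T := max a ((2 + β) / r)
  have haT : a ≤ T := le_max_left _ _
  have hT0 : 0 < T := ha.trans_le haT
  have hrT : 2 + β ≤ r * T := by rw [← div_le_iff₀' hr]; exact le_max_right _ _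
  refine ⟨T, haT, riccati_ge_of_subsolution (g' := fun x => r * T / x ^ 2)
    (fun x hx => hS x (haT.trans hx))
    (fun x hx => by
      simpa using (hasDerivAt_const_div_pow (r * T) 1 (hT0.trans_le hx).ne').const_sub r)
    (fun x hx => ?_) ?_⟩
  · have hx0 : 0 < x := hT0.trans_le hx
    have key : r ^ 2 - β / x ^ 2 - (r - r * T / x) ^ 2 - r * T / x ^ 2
        = (2 * (r * T) * (r * x) - r * T - (r * T) ^ 2 - β) / x ^ 2 := by field_simp; ring
    rw [← sub_pos, key]
    apply div_pos _ (by positivity)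
    have : r * T ≤ r * x := by gcongr; exact hx
    nlinarith
  · simpa [hT0.ne'] using hS0 T haT

theorem exists_abs_riccati_sub_le_div
    (hS : ∀ x ∈ Ici a, HasDerivAt S (r ^ 2 - β / x ^ 2 - S x ^ 2) x)
    (hS0 : ∀ x ∈ Ici a, 0 ≤ S x) (hr : 0 < r) (hβ : 0 ≤ β) (ha : 0 < a) :
    ∃ L, ∃ T ≥ a, ∀ x ∈ Ici T, |S x - r| ≤ L / x := by
  obtain ⟨M, hM⟩ := exists_riccati_le_add_div hS hr hβ ha
  obtain ⟨T, haT, hT⟩ := exists_sub_div_le_riccati hS hS0 hr hβ ha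
  refine ⟨max M (r * T), T, haT, fun x hx => abs_sub_le_iff.2 ⟨?_, ?_⟩⟩
  · have hx0 : 0 < x := ha.trans_le (haT.trans hx)
    have : M / x ≤ max M (r * T) / x := by gcongr; exact le_max_left _ _
    linarith [hM x (haT.trans hx)]
  · have hx0 : 0 < x := ha.trans_le (haT.trans hx)
    have : r * T / x ≤ max M (r * T) / x := by gcongr; exact le_max_right _ _
    linarith [hT x hx]

end InverseSquarePotential

section Expansion

variable {r a C K T x : ℝ}

theorem upper_expansion_barrier_ineq (ha : 0 ≤ a) (hC : 0 < C) (hx : 0 < x)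
    (hrx : 3 < 2 * r * x) :
    r ^ 2 - 2 * r * a / x ^ 2 - (r - a / x ^ 2 + C / x ^ 3) ^ 2
      < 2 * a / x ^ 3 - 3 * C / x ^ 4 := by
  have key : 2 * a / x ^ 3 - 3 * C / x ^ 4
      - (r ^ 2 - 2 * r * a / x ^ 2 - (r - a / x ^ 2 + C / x ^ 3) ^ 2)
      = (2 * a * x ^ 3 + C * x ^ 2 * (2 * r * x - 3) + (a * x - C) ^ 2) / x ^ 6 := by
    field_simp; ring
  have : 0 < C * x ^ 2 * (2 * r * x - 3) := by apply mul_pos (by positivity); linarith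
  rw [← sub_pos, key]
  positivity

theorem lower_expansion_barrier_ineq (ha : 0 ≤ a) (haK : a ≤ K) (hK : 0 < K) (hT : 1 ≤ T)
    (hrT : 9 + 6 * K < r * T) (hx : T ≤ x) :
    2 * a / x ^ 3 + 3 * (K * T ^ 2) / x ^ 4
      < r ^ 2 - 2 * r * a / x ^ 2 - (r - a / x ^ 2 - K * T ^ 2 / x ^ 3) ^ 2 := by
  have hx0 : 0 < x := by linarith
  set C := K * T ^ 2 with hC
  have hC0 : 0 < C := by positivity
  have hr : 0 < r := by by_contra! h; nlinarith
  have key : r ^ 2 - 2 * r * a / x ^ 2 - (r - a / x ^ 2 - C / x ^ 3) ^ 2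
      - (2 * a / x ^ 3 + 3 * C / x ^ 4)
      = (2 * r * C * x ^ 3 - 2 * a * x ^ 3 - (a ^ 2 + 3 * C) * x ^ 2 - 2 * a * C * x - C ^ 2)
        / x ^ 6 := by
    field_simp; ring
  -- Each of the five negative terms is at most a third of `r C x³`.
  have hrC : r * C = K * T * (r * T) := by rw [hC]; ring
  have hrx : r * T ≤ r * x := by gcongr
  have hTx : 1 ≤ T * x := by nlinarith
  have h₁ : 6 * a ≤ r * C := by
    nlinarith [mul_nonneg (mul_nonneg hK.le (by linarith : 0 ≤ r * T)) (sub_nonneg.2 hT)]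
  have h₂ : 9 ≤ r * x := by linarith
  have h₃ : 3 * a ^ 2 ≤ r * C * x := by
    have : r * C * x = K * (r * T) * (T * x) := by rw [hrC]; ring
    nlinarith [mul_le_mul_of_nonneg_left hTx (mul_nonneg hK.le (by linarith : 0 ≤ r * T))]
  have h₄ : 6 * a ≤ r * x ^ 2 := by nlinarith
  have h₅ : 3 * C < r * x ^ 3 := by
    have : T ^ 3 ≤ x ^ 3 := by gcongr
    nlinarith
  rw [← sub_pos, key]
  apply div_pos _ (by positivity)
  nlinarith [mul_le_mul_of_nonneg_right h₁ (pow_nonneg hx0.le 3),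
    mul_le_mul_of_nonneg_left h₂ (mul_nonneg hC0.le (sq_nonneg x)),
    mul_le_mul_of_nonneg_right h₃ (sq_nonneg x),
    mul_le_mul_of_nonneg_left h₄ (mul_nonneg hC0.le hx0.le),
    mul_lt_mul_of_pos_left h₅ hC0]

end Expansion

theorem exists_abs_riccati_expansion_le {S : ℝ → ℝ} {r β a L : ℝ}
    (hS : ∀ x ∈ Ici a, HasDerivAt S (r ^ 2 - β / x ^ 2 - S x ^ 2) x)
    (hr : 0 < r) (hβ : 0 ≤ β) (ha : 0 < a) (hL : ∀ x ∈ Ici a, |S x - r| ≤ L / x) :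
    ∃ C > 0, ∃ T ≥ a, ∀ x ≥ T, |S x - r + β / (2 * r * x ^ 2)| ≤ C / x ^ 3 := by
  set b := β / (2 * r)
  have hβb : β = 2 * r * b := (mul_div_cancel₀ β (by positivity)).symm
  have hb : 0 ≤ b := by positivity
  set K := |L| + b + 1
  have hK : 0 < K := by positivity
  set T := max a (max 1 ((10 + 6 * K) / r))
  have haT : a ≤ T := le_max_left _ _
  have hT1 : 1 ≤ T := (le_max_left _ _).trans (le_max_right _ _)
  have hT0 : 0 < T := ha.trans_le haT
  have hrT : 9 + 6 * K < r * T := by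
    have : (10 + 6 * K) / r ≤ T := (le_max_right _ _).trans (le_max_right _ _)
    rw [div_le_iff₀' hr] at this
    linarith
  have hS' : ∀ x ∈ Ici T, HasDerivAt S (r ^ 2 - 2 * r * b / x ^ 2 - S x ^ 2) x := fun x hx => by
    rw [← hβb]; exact hS x (haT.trans hx)
  have hST := abs_sub_le_iff.1 (hL T haT)
  have hKT : K * T ^ 2 / T ^ 3 = |L| / T + b / T + 1 / T := by field_simp; ring
  have hbT : b / T ^ 2 ≤ b / T := div_le_div_of_nonneg_left hb hT0 (by nlinarith)
  have hLT : L / T ≤ |L| / T := by gcongr; exact le_abs_self L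
  have hbT' : 0 ≤ b / T ^ 2 := by positivity
  have hT' : 0 ≤ 1 / T := by positivity
  have hupper := riccati_le_of_supersolution hS'
    (g := fun x => r - b / x ^ 2 + K * T ^ 2 / x ^ 3)
    (g' := fun x => 2 * b / x ^ 3 - 3 * (K * T ^ 2) / x ^ 4)
    (fun x hx => (((hasDerivAt_const_div_pow b 2 (hT0.trans_le hx).ne').const_sub r).add
      (hasDerivAt_const_div_pow (K * T ^ 2) 3 (hT0.trans_le hx).ne')).congr_deriv
        (by push_cast; ring))
    (fun x hx => upper_expansion_barrier_ineq hb (by positivity) (hT0.trans_le hx)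
      (by nlinarith [mul_le_mul_of_nonneg_left (mem_Ici.1 hx) hr.le]))
    (by linarith)
  have hlower := riccati_ge_of_subsolution hS'
    (g := fun x => r - b / x ^ 2 - K * T ^ 2 / x ^ 3)
    (g' := fun x => 2 * b / x ^ 3 + 3 * (K * T ^ 2) / x ^ 4)
    (fun x hx => (((hasDerivAt_const_div_pow b 2 (hT0.trans_le hx).ne').const_sub r).sub
      (hasDerivAt_const_div_pow (K * T ^ 2) 3 (hT0.trans_le hx).ne')).congr_deriv
        (by push_cast; ring))
    (fun x hx => lower_expansion_barrier_ineq hb (by linarith [abs_nonneg L]) hK hT1 hrT hx)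
    (by linarith)
  refine ⟨K * T ^ 2, by positivity, T, haT, fun x hx => ?_⟩
  have hx0 : 0 < x := hT0.trans_le hx
  have : β / (2 * r * x ^ 2) = b / x ^ 2 := by rw [hβb]; field_simp
  rw [this, abs_le]
  constructor <;> linarith [hupper x hx, hlower x hx]

theorem stmt_4_general (κ β R₁ : ℝ) (hκ : 0 < κ) (hβ : 0 < β) (hR₁ : 0 < R₁)
    (Rmin J J' J'' : ℝ → ℝ)
    (hRmin_nonpos : ∀ t ∈ Ici (0 : ℝ), Rmin t ≤ 0)
    (hRmin_eq : ∀ t ≥ R₁, Rmin t = -κ + β / t ^ 2)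
    (hJ' : ∀ t ∈ Ici (0 : ℝ), HasDerivWithinAt J (J' t) (Ici 0) t)
    (hJ'' : ∀ t ∈ Ici (0 : ℝ), HasDerivWithinAt J' (J'' t) (Ici 0) t)
    (hODE : ∀ t ∈ Ici (0 : ℝ), J'' t + Rmin t * J t = 0)
    (hJ0 : J 0 = 0) (hJ'0 : J' 0 = 1)
    (S : ℝ → ℝ) (hS : ∀ t > (0 : ℝ), S t = J' t / J t) :
    ∃ C > (0 : ℝ), ∃ T ≥ R₁, ∀ t ≥ T,
      |S t - Real.sqrt κ + β / (2 * Real.sqrt κ * t ^ 2)| ≤ C / t ^ 3 := by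
  have hr : 0 < √κ := Real.sqrt_pos.2 hκ
  have hJ'_ge := one_le_deriv_of_jacobi hRmin_nonpos hJ' hJ'' hODE hJ0 hJ'0
  have hJ_ge := self_le_of_jacobi hRmin_nonpos hJ' hJ'' hODE hJ0 hJ'0
  have hRiccati : ∀ x ∈ Ici R₁, HasDerivAt S (√κ ^ 2 - β / x ^ 2 - S x ^ 2) x := fun x hx => by
    have hx0 : 0 < x := hR₁.trans_le hx
    have h := hasDerivAt_riccati_of_jacobi ((hJ' x hx0.le).hasDerivAt (Ici_mem_nhds hx0))
      ((hJ'' x hx0.le).hasDerivAt (Ici_mem_nhds hx0)) (hODE x hx0.le)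
      (hx0.trans_le (hJ_ge x hx0.le)).ne' (eventually_of_mem (Ioi_mem_nhds hx0) hS)
    convert h using 1
    rw [hRmin_eq x hx, Real.sq_sqrt hκ.le]
    ring
  have hS_nonneg : ∀ x ∈ Ici R₁, 0 ≤ S x := fun x hx => by
    have hx0 : 0 < x := hR₁.trans_le hx
    rw [hS x hx0]
    exact div_nonneg (zero_le_one.trans (hJ'_ge x hx0.le)) (hx0.le.trans (hJ_ge x hx0.le))
  obtain ⟨L, T, hT, hL⟩ := exists_abs_riccati_sub_le_div hRiccati hS_nonneg hr hβ.le hR₁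
  obtain ⟨C, hC, T', hT', hexp⟩ := exists_abs_riccati_expansion_le
    (fun x hx => hRiccati x (hT.trans hx)) hr hβ.le (hR₁.trans_le hT) hL
  exact ⟨C, hC, T', hT.trans hT', hexp⟩

/-- Let `κ > 0`, `β > 0`, `R₁ > 0` with `R₁² ≥ β/κ`. Let `R_min ≤ 0` be
continuous on `[0,∞)` with `R_min(t) = -κ + β/t²` for `t ≥ R₁`, and let `J` solve the
Jacobi equation `J'' + R_min·J = 0`, `J(0) = 0`, `J'(0) = 1`. Then `S = J'/J` has the
asymptotic expansion `S(t) = √κ - β/(2√κ·t²) + O(1/t³)` as `t → ∞`: there exist `C > 0`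
and `T ≥ R₁` with `|S(t) - √κ + β/(2√κ·t²)| ≤ C/t³` for all `t ≥ T`. -/
theorem stmt_4 (κ β R₁ : ℝ) (hκ : 0 < κ) (hβ : 0 < β) (hR₁ : 0 < R₁)
    (hR₁β : R₁ ^ 2 ≥ β / κ)
    (Rmin J J' J'' : ℝ → ℝ)
    (hRmin_cont : ContinuousOn Rmin (Ici 0))
    (hRmin_nonpos : ∀ t ∈ Ici (0 : ℝ), Rmin t ≤ 0)
    (hRmin_eq : ∀ t ≥ R₁, Rmin t = -κ + β / t ^ 2)
    (hJ' : ∀ t ∈ Ici (0 : ℝ), HasDerivWithinAt J (J' t) (Ici 0) t)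
    (hJ'' : ∀ t ∈ Ici (0 : ℝ), HasDerivWithinAt J' (J'' t) (Ici 0) t)
    (hJ''cont : ContinuousOn J'' (Ici 0))
    (hODE : ∀ t ∈ Ici (0 : ℝ), J'' t + Rmin t * J t = 0)
    (hJ0 : J 0 = 0) (hJ'0 : J' 0 = 1)
    (S : ℝ → ℝ) (hS : ∀ t > (0 : ℝ), S t = J' t / J t) :
    ∃ C > (0 : ℝ), ∃ T ≥ R₁, ∀ t ≥ T,
      |S t - Real.sqrt κ + β / (2 * Real.sqrt κ * t ^ 2)| ≤ C / t ^ 3 :=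
  stmt_4_general κ β R₁ hκ hβ hR₁ Rmin J J' J'' hRmin_nonpos hRmin_eq hJ' hJ'' hODE hJ0 hJ'0 S hS
end

section
/- Let n ≥ 2 be an integer, L > 0 and λ > 0. Let R_min : [0, ∞) → ℝ be a continuous function with R_min(t) ≤ 0 for all t ≥ 0, let J : [0, ∞) → ℝ be the C² solution of the Jacobi equation J''(t) + R_min(t)·J(t) = 0 with J(0) = 0, J'(0) = 1, and set S(t) = J'(t)/J(t) for t > 0. Let h₁ : [0, L] → ℝ be a C² function satisfying the ODE −h₁''(x) − (n−1)·S(x)·h₁'(x) = λ·h₁(x) for all x ∈ (0, L], together with h₁'(0) = 0, h₁(L) = 0, and h₁(x) > 0 for all x ∈ [0, L). Then h₁'(x) < 0 for all x ∈ (0, L]. -/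
/-!
Multiplying the equation by `J^(n-1)` puts it in divergence form,
`(J^(n-1) h₁')' = -λ J^(n-1) h₁`. Since `R_min ≤ 0`, the Jacobi field `J` is convex wherever it
is positive and therefore never returns to `0`; hence the right-hand side is negative on `(0, L)`,
and the flux `J^(n-1) h₁'`, which vanishes at `0`, is negative on `(0, L]`.
-/

open Set Real

section

variable {f f' f'' : ℝ → ℝ} {a b : ℝ}

theorem strictMonoOn_Icc_of_hasDerivWithinAt_Ici_pos
    (hf : ∀ t ∈ Ici a, HasDerivWithinAt f (f' t) (Ici a) t) (hpos : ∀ t ∈ Ioo a b, 0 < f' t) :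
    StrictMonoOn f (Icc a b) :=
  strictMonoOn_of_hasDerivWithinAt_pos (convex_Icc a b)
    (fun t ht => (hf t ht.1).continuousWithinAt.mono Icc_subset_Ici_self)
    (fun t ht => by
      rw [interior_Icc] at ht ⊢
      exact ((hf t ht.1.le).hasDerivAt (Ici_mem_nhds ht.1)).hasDerivWithinAt)
    (fun t ht => hpos t (by rwa [interior_Icc] at ht))

theorem monotoneOn_Icc_of_hasDerivWithinAt_Ici_nonneg
    (hf : ∀ t ∈ Ici a, HasDerivWithinAt f (f' t) (Ici a) t) (hnonneg : ∀ t ∈ Ioo a b, 0 ≤ f' t) :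
    MonotoneOn f (Icc a b) :=
  monotoneOn_of_hasDerivWithinAt_nonneg (convex_Icc a b)
    (fun t ht => (hf t ht.1).continuousWithinAt.mono Icc_subset_Ici_self)
    (fun t ht => by
      rw [interior_Icc] at ht ⊢
      exact ((hf t ht.1.le).hasDerivAt (Ici_mem_nhds ht.1)).hasDerivWithinAt)
    (fun t ht => hnonneg t (by rwa [interior_Icc] at ht))

theorem pos_of_deriv2_nonneg_of_pos
    (hf : ∀ t ∈ Ici 0, HasDerivWithinAt f (f' t) (Ici 0) t)
    (hf' : ∀ t ∈ Ici 0, HasDerivWithinAt f' (f'' t) (Ici 0) t)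
    (hf'' : ∀ t > 0, 0 < f t → 0 ≤ f'' t) (h0 : f 0 = 0) (h'0 : 0 < f' 0) :
    ∀ t > 0, 0 < f t := by
  intro t ht
  set c := f' 0 / 2
  have hc : 0 < c := half_pos h'0
  -- If the slope drops to `c` before `t`, then up to the first such time `s₀` the function is
  -- increasing, hence positive, hence convex, so that `f' s₀ ≥ f' 0 > c`.
  suffices hslope : ∀ s ∈ Icc 0 t, c < f' s by
    have := strictMonoOn_Icc_of_hasDerivWithinAt_Ici_pos hf
      (fun s hs => hc.trans (hslope s (Ioo_subset_Icc_self hs)))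
      (left_mem_Icc.2 ht.le) (right_mem_Icc.2 ht.le) ht
    rwa [h0] at this
  by_contra! hdrop
  have hZ : IsCompact (Icc 0 t ∩ f' ⁻¹' Iic c) :=
    isCompact_Icc.of_isClosed_subset
      (ContinuousOn.preimage_isClosed_of_isClosed
        (fun s hs => (hf' s hs.1).continuousWithinAt.mono Icc_subset_Ici_self)
        isClosed_Icc isClosed_Iic) inter_subset_left
  obtain ⟨s₀, ⟨hs₀t, hs₀c⟩, hleast⟩ :=
    hZ.exists_isLeast (let ⟨s, hs, hsc⟩ := hdrop; ⟨s, hs, hsc⟩)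
  have hs₀ : 0 < s₀ :=
    hs₀t.1.lt_of_ne (by rintro rfl; exact (half_lt_self h'0).not_ge hs₀c)
  have hbefore : ∀ s ∈ Ico 0 s₀, c < f' s := fun s hs =>
    not_le.1 fun h => (hleast ⟨⟨hs.1, hs.2.le.trans hs₀t.2⟩, h⟩).not_gt hs.2
  have hmono : StrictMonoOn f (Icc 0 s₀) := strictMonoOn_Icc_of_hasDerivWithinAt_Ici_pos hf
    fun s hs => hc.trans (hbefore s (Ioo_subset_Ico_self hs))
  have hconvex : MonotoneOn f' (Icc 0 s₀) := monotoneOn_Icc_of_hasDerivWithinAt_Ici_nonneg hf'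
    fun s hs => hf'' s hs.1 <| by
      simpa [h0] using hmono (left_mem_Icc.2 hs₀.le) (Ioo_subset_Icc_self hs) hs.1
  have := hconvex (left_mem_Icc.2 hs₀.le) (right_mem_Icc.2 hs₀.le) hs₀.le
  exact (half_lt_self h'0).not_ge (this.trans hs₀c)

end

/-- With `g = h'` and `k = n - 1` this writes `h'' + (n - 1) (J'/J) h'` as
`J^(1-n) (J^(n-1) h')'`. -/
theorem HasDerivAt.pow_mul_logDeriv {J g : ℝ → ℝ} {J' g' x : ℝ} (k : ℕ)
    (hJ : HasDerivAt J J' x) (hg : HasDerivAt g g' x) (hJx : J x ≠ 0) :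
    HasDerivAt (fun y => J y ^ k * g y) (J x ^ k * (g' + k * (J' / J x) * g x)) x := by
  refine ((hJ.fun_pow k).mul hg).congr_deriv ?_
  rcases k with _ | k
  · simp
  · simp only [Nat.cast_add, Nat.cast_one, add_tsub_cancel_right]
    field_simp
    ring

theorem stmt_6_general (n : ℕ) (hn : 2 ≤ n) (L lam : ℝ) (hlam : 0 < lam)
    (Rmin J J' J'' : ℝ → ℝ)
    (hRmin_nonpos : ∀ t ∈ Ici (0 : ℝ), Rmin t ≤ 0)
    (hJ' : ∀ t ∈ Ici (0 : ℝ), HasDerivWithinAt J (J' t) (Ici 0) t)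
    (hJ'' : ∀ t ∈ Ici (0 : ℝ), HasDerivWithinAt J' (J'' t) (Ici 0) t)
    (hODE : ∀ t ∈ Ici (0 : ℝ), J'' t + Rmin t * J t = 0)
    (hJ0 : J 0 = 0) (hJ'0 : J' 0 = 1)
    (S : ℝ → ℝ) (hS : ∀ t > (0 : ℝ), S t = J' t / J t)
    (h₁ h₁' h₁'' : ℝ → ℝ)
    (hh₁'' : ∀ x ∈ Icc (0 : ℝ) L, HasDerivWithinAt h₁' (h₁'' x) (Icc 0 L) x)
    (hODE₁ : ∀ x ∈ Ioc (0 : ℝ) L,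
      -h₁'' x - ((n : ℝ) - 1) * S x * h₁' x = lam * h₁ x)
    (hh₁'0 : h₁' 0 = 0)
    (hpos : ∀ x ∈ Ico (0 : ℝ) L, 0 < h₁ x) :
    ∀ x ∈ Ioc (0 : ℝ) L, h₁' x < 0 := by
  obtain ⟨k, rfl⟩ : ∃ k, n = k + 1 := ⟨n - 1, by omega⟩
  push_cast at hODE₁
  have hJpos : ∀ t > 0, 0 < J t := pos_of_deriv2_nonneg_of_pos hJ' hJ''
    (fun t ht hJt => by nlinarith [hODE t ht.le, hRmin_nonpos t ht.le]) hJ0 (hJ'0 ▸ one_pos)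
  set F : ℝ → ℝ := fun y => J y ^ k * h₁' y
  have hF : ∀ y ∈ Ioo 0 L, HasDerivAt F (-(lam * (J y ^ k * h₁ y))) y := by
    intro y hy
    convert ((hJ' y hy.1.le).hasDerivAt (Ici_mem_nhds hy.1)).pow_mul_logDeriv k
      ((hh₁'' y (Ioo_subset_Icc_self hy)).hasDerivAt (Icc_mem_nhds hy.1 hy.2))
      (hJpos y hy.1).ne' using 1
    rw [← hS y hy.1]
    linear_combination J y ^ k * hODE₁ y (Ioo_subset_Ioc_self hy)
  have hanti : StrictAntiOn F (Icc 0 L) := strictAntiOn_of_hasDerivWithinAt_neg (convex_Icc 0 L)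
    (fun y hy => (((hJ' y hy.1).continuousWithinAt.mono Icc_subset_Ici_self).pow k).mul
      (hh₁'' y hy).continuousWithinAt)
    (fun y hy => by rw [interior_Icc] at hy ⊢; exact (hF y hy).hasDerivWithinAt)
    (fun y hy => by
      rw [interior_Icc] at hy
      have := mul_pos hlam (mul_pos (pow_pos (hJpos y hy.1) k) (hpos y (Ioo_subset_Ico_self hy)))
      linarith)
  intro x hx
  have hFx : F x < F 0 :=
    hanti (left_mem_Icc.2 (hx.1.le.trans hx.2)) (Ioc_subset_Icc_self hx) hx.1
  simp only [F, hh₁'0, mul_zero] at hFx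
  exact neg_of_mul_neg_right hFx (pow_pos (hJpos x hx.1) k).le

/-- Lemma 2.1 of the paper. With `R_min ≤ 0` continuous on `[0,∞)` and
`J` the solution of the Jacobi equation `J'' + R_min·J = 0`, `J(0) = 0`, `J'(0) = 1`, set
`S = J'/J` on `(0,∞)`. Let `n ≥ 2`, `L > 0`, `λ > 0`, and let `h₁ : [0,L] → ℝ` be a C²
function with `-h₁'' - (n-1)·S·h₁' = λ·h₁` on `(0,L]`, `h₁'(0) = 0`, `h₁(L) = 0` and
`h₁ > 0` on `[0,L)`. Then `h₁' < 0` on `(0,L]`. -/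
theorem stmt_6 (n : ℕ) (hn : 2 ≤ n) (L lam : ℝ) (hL : 0 < L) (hlam : 0 < lam)
    (Rmin J J' J'' : ℝ → ℝ)
    (hRmin_cont : ContinuousOn Rmin (Ici 0))
    (hRmin_nonpos : ∀ t ∈ Ici (0 : ℝ), Rmin t ≤ 0)
    (hJ' : ∀ t ∈ Ici (0 : ℝ), HasDerivWithinAt J (J' t) (Ici 0) t)
    (hJ'' : ∀ t ∈ Ici (0 : ℝ), HasDerivWithinAt J' (J'' t) (Ici 0) t)
    (hJ''cont : ContinuousOn J'' (Ici 0))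
    (hODE : ∀ t ∈ Ici (0 : ℝ), J'' t + Rmin t * J t = 0)
    (hJ0 : J 0 = 0) (hJ'0 : J' 0 = 1)
    (S : ℝ → ℝ) (hS : ∀ t > (0 : ℝ), S t = J' t / J t)
    (h₁ h₁' h₁'' : ℝ → ℝ)
    (hh₁' : ∀ x ∈ Icc (0 : ℝ) L, HasDerivWithinAt h₁ (h₁' x) (Icc 0 L) x)
    (hh₁'' : ∀ x ∈ Icc (0 : ℝ) L, HasDerivWithinAt h₁' (h₁'' x) (Icc 0 L) x)
    (hh₁''cont : ContinuousOn h₁'' (Icc 0 L))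
    (hODE₁ : ∀ x ∈ Ioc (0 : ℝ) L,
      -h₁'' x - ((n : ℝ) - 1) * S x * h₁' x = lam * h₁ x)
    (hh₁'0 : h₁' 0 = 0) (hh₁L : h₁ L = 0)
    (hpos : ∀ x ∈ Ico (0 : ℝ) L, 0 < h₁ x) :
    ∀ x ∈ Ioc (0 : ℝ) L, h₁' x < 0 :=
  stmt_6_general n hn L lam hlam Rmin J J' J'' hRmin_nonpos hJ' hJ'' hODE hJ0 hJ'0 S hS h₁ h₁' h₁''
    hh₁'' hODE₁ hh₁'0 hpos
end

section
/- Let n ≥ 2 be an integer, κ > 0, and let β and δ > 0 satisfy β·(n−1)² > 1 + δ. Let R₁ > 0 with R₁² ≥ β/κ, and let R_min : [0, ∞) → ℝ be a continuous function with R_min(t) ≤ 0 for all t ≥ 0 and R_min(t) = −κ + β/t² for all t ≥ R₁. Let J : [0, ∞) → ℝ be the C² solution of the Jacobi equation J''(t) + R_min(t)·J(t) = 0 with J(0) = 0, J'(0) = 1, and set S(t) = J'(t)/J(t) for t > 0. Then there exists a constant R₀ > 0 (depending only on n, β, κ, δ and R_min) with the following property: for every R ≥ R₀, every k > 2, every λ₁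 > 0, and every C² function φ₁ : [R, 2kR] → ℝ, not identically zero, satisfying −φ₁''(x) − (1+δ)/(4x²)·φ₁(x) = −λ₁·φ₁(x) on [R, 2kR] with φ₁(R) = φ₁(2kR) = 0, the function f(x) := φ₁(x)·J(x)^{−(n−1)/2} satisfies ∫_R^{2kR} |f'(x)|²·J(x)^{n−1} dx < ( (n−1)²κ/4 − λ₁ ) · ∫_R^{2kR} |f(x)|²·J(x)^{n−1} dx. -/
/-!
Put `m = (n-1)/2` and `S = J'/J`, so that `f' J^m = φ₁' - m S φ₁` and `f J^m = φ₁`. Integrating by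
parts twice, with `φ₁(R) = φ₁(2kR) = 0`, the equation of `φ₁` and the Riccati equation
`S' = -R_min - S²`, turns the left side into `∫ (V - λ₁) φ₁²` with the potential
`V = (1+δ)/(4x²) - m R_min + (m² - m) S²`, and the right side into `((n-1)²κ/4 - λ₁) ∫ φ₁²`.
For `t ≥ R₁` the Riccati equation reads `S' = κ - β/t² - S²`; comparing `S` with the barriers
`√κ + C e^{-√κ t} - a/t²` gives `S = √κ - β/(2√κ t²) + o(t⁻²)`, hence
`V = m²κ - (m²β - (1+δ)/4)/x² + o(x⁻²)`, which is `< m²κ` for large `x` since `β(n-1)² > 1 + δ`.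
Positivity of `J` and of `S` comes from `(J J')' = J'² - R_min J² ≥ 0`.
-/

open Set Real Filter Topology intervalIntegral

theorem le_of_hasDerivAt_lt_deriv_boundary {f g f' g' : ℝ → ℝ} {a b : ℝ}
    (hf : ∀ x ∈ Icc a b, HasDerivAt f (f' x) x) (hg : ∀ x ∈ Icc a b, HasDerivAt g (g' x) x)
    (ha : f a ≤ g a) (hfg : ∀ x ∈ Ico a b, f x = g x → f' x < g' x) :
    ∀ x ∈ Icc a b, f x ≤ g x :=
  image_le_of_deriv_right_lt_deriv_boundary'
    (fun x hx => (hf x hx).continuousAt.continuousWithinAt)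
    (fun x hx => (hf x (Ico_subset_Icc_self hx)).hasDerivWithinAt) ha
    (fun x hx => (hg x hx).continuousAt.continuousWithinAt)
    (fun x hx => (hg x (Ico_subset_Icc_self hx)).hasDerivWithinAt) hfg

theorem le_of_hasDerivAt_lt_deriv_boundary_Ici {f g f' g' : ℝ → ℝ} {a : ℝ}
    (hf : ∀ x ≥ a, HasDerivAt f (f' x) x) (hg : ∀ x ≥ a, HasDerivAt g (g' x) x)
    (ha : f a ≤ g a) (hfg : ∀ x ≥ a, f x = g x → f' x < g' x) :
    ∀ x ≥ a, f x ≤ g x := fun x hx =>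
  le_of_hasDerivAt_lt_deriv_boundary (fun y hy => hf y hy.1) (fun y hy => hg y hy.1) ha
    (fun y hy => hfg y hy.1) x ⟨hx, le_rfl⟩

theorem eventually_abs_div_pow_lt (a : ℝ) {k : ℕ} (hk : k ≠ 0) {c : ℝ} (hc : 0 < c) :
    ∀ᶠ t in atTop, |a / t ^ k| < c := by
  have : Tendsto (fun t : ℝ => a / t ^ k) atTop (𝓝 0) :=
    tendsto_const_nhds.div_atTop (tendsto_pow_atTop hk)
  filter_upwards [this.abs.eventually (gt_mem_nhds (by simpa using hc))] with t ht
  simpa using ht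

theorem eventually_mul_exp_neg_le {b : ℝ} (hb : 0 < b) (C : ℝ) {c : ℝ} (hc : 0 < c) :
    ∀ᶠ t in atTop, C * exp (-(b * t)) ≤ c / t ^ 2 := by
  have h : Tendsto (fun t : ℝ => C * (t ^ (2 : ℝ) * exp (-b * t))) atTop (𝓝 0) := by
    simpa using (tendsto_rpow_mul_exp_neg_mul_atTop_nhds_zero 2 b hb).const_mul C
  filter_upwards [h.eventually (gt_mem_nhds hc), eventually_gt_atTop 0] with t ht ht0
  rw [le_div_iff₀ (by positivity)]
  rw [rpow_two, neg_mul] at ht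
  linarith [show C * exp (-(b * t)) * t ^ 2 = C * (t ^ 2 * exp (-(b * t))) by ring]

theorem hasDerivAt_exp_barrier (s C a : ℝ) {t : ℝ} (ht : t ≠ 0) :
    HasDerivAt (fun t => s + C * exp (-(s * t)) - a / t ^ 2)
      (-(s * (C * exp (-(s * t)))) + 2 * a / t ^ 3) t := by
  have hexp : HasDerivAt (fun t => C * exp (-(s * t))) (C * (exp (-(s * t)) * -s)) t :=
    (((hasDerivAt_id t).const_mul s).neg.exp.congr_deriv (by simp)).const_mul C
  have hinv : HasDerivAt (fun t => a / t ^ 2) (-(2 * a / t ^ 3)) t :=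
    ((hasDerivAt_const t a).div (hasDerivAt_pow 2 t) (pow_ne_zero 2 ht)).congr_deriv (by
      field_simp; ring)
  exact ((hexp.const_add s).sub hinv).congr_deriv (by ring)

theorem eventually_sqrt_div_two_le_of_riccati {κ β : ℝ} {S : ℝ → ℝ} (hκ : 0 < κ)
    (hS : ∀ᶠ t in atTop, HasDerivAt S (κ - β / t ^ 2 - S t ^ 2) t)
    (hS0 : ∀ᶠ t in atTop, 0 ≤ S t) : ∀ᶠ t in atTop, √κ / 2 ≤ S t := by
  set s := √κ
  have hs : 0 < s := sqrt_pos.2 hκ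
  have hs2 : s ^ 2 = κ := sq_sqrt hκ.le
  obtain ⟨T, hT⟩ := eventually_atTop.1
    ((hS.and hS0).and (eventually_abs_div_pow_lt β two_ne_zero (by positivity : 0 < κ / 4)))
  have hslope : κ / 4 * (2 / s) = s / 2 := by rw [← hs2]; field_simp; ring
  -- `S` stays above the ramp `κ/4 (t - T)` while the ramp is below `√κ/2`, since there `S' ≥ κ/2`.
  have hramp : s / 2 ≤ S (T + 2 / s) := by
    have := le_of_hasDerivAt_lt_deriv_boundary (a := T) (b := T + 2 / s)
      (f := fun t => κ / 4 * (t - T)) (f' := fun _ => κ / 4)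
      (g' := fun t => κ - β / t ^ 2 - S t ^ 2)
      (fun x _ => (((hasDerivAt_id x).sub_const T).const_mul (κ / 4)).congr_deriv (by simp))
      (fun x hx => (hT x hx.1).1.1) (by simpa using (hT T le_rfl).1.2)
      (fun x hx hSx => by
        obtain ⟨⟨-, hSx0⟩, hβx⟩ := hT x hx.1
        have hSx_le : S x ≤ s / 2 := by
          rw [← hSx, ← hslope]
          gcongr
          linarith [hx.2]
        have : S x ^ 2 ≤ κ / 4 := by nlinarith
        linarith [le_abs_self (β / x ^ 2)])
      (T + 2 / s) ⟨by linarith [div_pos two_pos hs], le_rfl⟩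
    simpa [hslope] using this
  have hT' : T ≤ T + 2 / s := by linarith [div_pos two_pos hs]
  refine eventually_atTop.2 ⟨T + 2 / s, le_of_hasDerivAt_lt_deriv_boundary_Ici
    (f' := fun _ => 0) (g' := fun t => κ - β / t ^ 2 - S t ^ 2)
    (fun x _ => hasDerivAt_const x _) (fun x hx => (hT x (hT'.trans hx)).1.1) hramp
    (fun x hx hSx => ?_)⟩
  have hβx := hT x (hT'.trans hx)
  rw [← hSx, div_pow, hs2]
  linarith [le_abs_self (β / x ^ 2), hβx.2]

theorem riccati_le_exp_barrier {κ β a : ℝ} {S : ℝ → ℝ} (hκ : 0 < κ)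
    (hS : ∀ᶠ t in atTop, HasDerivAt S (κ - β / t ^ 2 - S t ^ 2) t) (ha : 2 * √κ * a < β) :
    ∃ C, ∀ᶠ t in atTop, S t ≤ √κ + C * exp (-(√κ * t)) - a / t ^ 2 := by
  set s := √κ
  have hs : 0 < s := sqrt_pos.2 hκ
  have hs2 : s ^ 2 = κ := sq_sqrt hκ.le
  obtain ⟨T, hT⟩ := eventually_atTop.1 ((hS.and (eventually_gt_atTop 0)).and
    (eventually_abs_div_pow_lt (2 * a) one_ne_zero (sub_pos.2 ha)))
  set C := max 0 ((S T - s + a / T ^ 2) * exp (s * T))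
  refine ⟨C, eventually_atTop.2 ⟨T, le_of_hasDerivAt_lt_deriv_boundary_Ici
    (fun x hx => (hT x hx).1.1) (fun x hx => hasDerivAt_exp_barrier s C a (hT x hx).1.2.ne')
    ?_ fun x hx hSx => ?_⟩⟩
  · have : S T - s + a / T ^ 2 ≤ C * exp (-(s * T)) :=
      calc _ = (S T - s + a / T ^ 2) * exp (s * T) * exp (-(s * T)) := by
            rw [mul_assoc, ← exp_add]; simp
        _ ≤ _ := by gcongr; exact le_max_right _ _
    linarith
  · obtain ⟨⟨-, hx0⟩, hax⟩ := hT x hx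
    rw [pow_one] at hax
    set X := C * exp (-(s * x))
    have hX : 0 ≤ X := mul_nonneg (le_max_left _ _) (exp_pos _).le
    have key : -(s * X) + 2 * a / x ^ 3 - (κ - β / x ^ 2 - S x ^ 2)
        = s * X + (X - a / x ^ 2) ^ 2 + (β - 2 * s * a + 2 * a / x) / x ^ 2 := by
      rw [hSx, ← hs2]; field_simp; ring
    have : 0 < (β - 2 * s * a + 2 * a / x) / x ^ 2 :=
      div_pos (by linarith [neg_abs_le (2 * a / x)]) (by positivity)
    nlinarith [sq_nonneg (X - a / x ^ 2), mul_nonneg hs.le hX]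

theorem exp_barrier_le_riccati {κ β a : ℝ} {S : ℝ → ℝ} (hκ : 0 < κ)
    (hS : ∀ᶠ t in atTop, HasDerivAt S (κ - β / t ^ 2 - S t ^ 2) t)
    (hS0 : ∀ᶠ t in atTop, 0 ≤ S t) (ha0 : 0 ≤ a) (ha : β < 2 * √κ * a) :
    ∃ C, ∀ᶠ t in atTop, √κ + C * exp (-(√κ * t)) - a / t ^ 2 ≤ S t := by
  set s := √κ
  have hs : 0 < s := sqrt_pos.2 hκ
  have hs2 : s ^ 2 = κ := sq_sqrt hκ.le
  have hε : 0 < (2 * s * a - β) / 2 := by linarith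
  obtain ⟨T, hT⟩ := eventually_atTop.1 ((((hS.and (eventually_gt_atTop 0)).and
    (eventually_sqrt_div_two_le_of_riccati hκ hS hS0)).and
    (eventually_abs_div_pow_lt (2 * a ^ 2) two_ne_zero hε)).and
    (eventually_abs_div_pow_lt (2 * a) one_ne_zero hε))
  -- `X = -C e^{-√κ t}` decreases from `√κ/2`, so that `2X² ≤ √κ X` at a touching point.
  set C := -(s / 2 * exp (s * T))
  refine ⟨C, eventually_atTop.2 ⟨T, le_of_hasDerivAt_lt_deriv_boundary_Ici
    (fun x hx => hasDerivAt_exp_barrier s C a (hT x hx).1.1.1.2.ne') (fun x hx => (hT x hx).1.1.1.1)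
    ?_ fun x hx hSx => ?_⟩⟩
  · have : C * exp (-(s * T)) = -(s / 2) := by
      rw [neg_mul, mul_assoc, ← exp_add]; simp
    rw [this]
    linarith [(hT T le_rfl).1.1.2, div_nonneg ha0 (sq_nonneg T)]
  · obtain ⟨⟨⟨⟨-, hx0⟩, -⟩, ha2x⟩, hax⟩ := hT x hx
    rw [pow_one] at hax
    set X := -(C * exp (-(s * x)))
    have hXdef : X = s / 2 * exp (s * (T - x)) := by
      simp only [X, C, neg_mul, neg_neg, mul_assoc, ← exp_add]; ring_nf
    have hX0 : 0 ≤ X := by rw [hXdef]; positivity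
    have hXs : X ≤ s / 2 := by
      rw [hXdef]
      exact mul_le_of_le_one_right (by positivity) (exp_le_one_iff.2 (by nlinarith))
    have key : κ - β / x ^ 2 - S x ^ 2 - (-(s * (C * exp (-(s * x)))) + 2 * a / x ^ 3)
        = s * X - (X + a / x ^ 2) ^ 2 + (2 * s * a - β - 2 * a / x) / x ^ 2 := by
      rw [← hSx, ← hs2]; field_simp; ring
    have hsq : (X + a / x ^ 2) ^ 2 ≤ 2 * X ^ 2 + 2 * a ^ 2 / x ^ 2 / x ^ 2 := by
      have : 2 * a ^ 2 / x ^ 2 / x ^ 2 = 2 * (a / x ^ 2) ^ 2 := by ring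
      nlinarith [sq_nonneg (X - a / x ^ 2)]
    have h2X : 2 * X ^ 2 ≤ s * X := by nlinarith
    have : 0 < (2 * s * a - β - 2 * a / x - 2 * a ^ 2 / x ^ 2) / x ^ 2 :=
      div_pos (by linarith [le_abs_self (2 * a / x), le_abs_self (2 * a ^ 2 / x ^ 2)])
        (by positivity)
    have : (2 * s * a - β - 2 * a / x - 2 * a ^ 2 / x ^ 2) / x ^ 2
        = (2 * s * a - β - 2 * a / x) / x ^ 2 - 2 * a ^ 2 / x ^ 2 / x ^ 2 := by ring
    linarith

theorem eventually_le_sqrt_sub_of_riccati {κ β a : ℝ} {S : ℝ → ℝ} (hκ : 0 < κ)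
    (hS : ∀ᶠ t in atTop, HasDerivAt S (κ - β / t ^ 2 - S t ^ 2) t) (ha : 2 * √κ * a < β) :
    ∀ᶠ t in atTop, S t ≤ √κ - a / t ^ 2 := by
  set s := √κ
  have hs : 0 < s := sqrt_pos.2 hκ
  obtain ⟨a₁, hsa₁⟩ : ∃ a₁, 2 * s * a₁ = (2 * s * a + β) / 2 :=
    ⟨(2 * s * a + β) / (4 * s), by field_simp; ring⟩
  have hgap : 0 < a₁ - a :=
    pos_of_mul_pos_right (by linarith : 0 < 2 * s * (a₁ - a)) (by positivity)
  obtain ⟨C, hC⟩ := riccati_le_exp_barrier hκ hS (by linarith : 2 * s * a₁ < β)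
  filter_upwards [hC, eventually_mul_exp_neg_le hs C hgap] with t hbar hexp
  linarith [show (a₁ - a) / t ^ 2 - a₁ / t ^ 2 = -(a / t ^ 2) by ring]

theorem eventually_sqrt_sub_le_of_riccati {κ β a : ℝ} {S : ℝ → ℝ} (hκ : 0 < κ) (hβ : 0 ≤ β)
    (hS : ∀ᶠ t in atTop, HasDerivAt S (κ - β / t ^ 2 - S t ^ 2) t)
    (hS0 : ∀ᶠ t in atTop, 0 ≤ S t) (ha : β < 2 * √κ * a) :
    ∀ᶠ t in atTop, √κ - a / t ^ 2 ≤ S t := by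
  set s := √κ
  have hs : 0 < s := sqrt_pos.2 hκ
  obtain ⟨a₁, hsa₁⟩ : ∃ a₁, 2 * s * a₁ = (2 * s * a + β) / 2 :=
    ⟨(2 * s * a + β) / (4 * s), by field_simp; ring⟩
  have ha₁ : 0 ≤ a₁ := (mul_nonneg_iff_of_pos_left (by positivity)).1 (by linarith : 0 ≤ 2 * s * a₁)
  have hgap : 0 < a - a₁ :=
    pos_of_mul_pos_right (by linarith : 0 < 2 * s * (a - a₁)) (by positivity)
  obtain ⟨C, hC⟩ := exp_barrier_le_riccati hκ hS hS0 ha₁ (by linarith)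
  filter_upwards [hC, eventually_mul_exp_neg_le hs (-C) hgap] with t hbar hexp
  linarith [show (a - a₁) / t ^ 2 + a₁ / t ^ 2 = a / t ^ 2 by ring]

theorem eventually_abs_sq_sub_le_of_riccati {κ β ε : ℝ} {S : ℝ → ℝ} (hκ : 0 < κ) (hβ : 0 ≤ β)
    (hS : ∀ᶠ t in atTop, HasDerivAt S (κ - β / t ^ 2 - S t ^ 2) t)
    (hS0 : ∀ᶠ t in atTop, 0 ≤ S t) (hε : 0 < ε) :
    ∀ᶠ t in atTop, |S t ^ 2 - (κ - β / t ^ 2)| ≤ ε / t ^ 2 := by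
  set s := √κ
  have hs : 0 < s := sqrt_pos.2 hκ
  have hs2 : s ^ 2 = κ := sq_sqrt hκ.le
  obtain ⟨aLo, hsLo⟩ : ∃ a, 2 * s * a = β - ε / 2 := ⟨(β - ε / 2) / (2 * s), by field_simp⟩
  obtain ⟨aHi, hsHi⟩ : ∃ a, 2 * s * a = β + ε := ⟨(β + ε) / (2 * s), by field_simp⟩
  filter_upwards [eventually_le_sqrt_sub_of_riccati hκ hS (by linarith : 2 * s * aLo < β),
    eventually_sqrt_sub_le_of_riccati hκ hβ hS hS0 (by linarith : β < 2 * s * aHi),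
    eventually_abs_div_pow_lt (aLo ^ 2) two_ne_zero (half_pos hε),
    eventually_abs_div_pow_lt aHi two_ne_zero hs, eventually_gt_atTop 0]
    with t hup hlow hsmall hpos ht
  have hlow0 : 0 ≤ s - aHi / t ^ 2 := by linarith [le_abs_self (aHi / t ^ 2)]
  have hsq_lo : (s - aHi / t ^ 2) ^ 2 ≤ S t ^ 2 := pow_le_pow_left₀ hlow0 hlow 2
  have hsq_hi : S t ^ 2 ≤ (s - aLo / t ^ 2) ^ 2 := pow_le_pow_left₀ (hlow0.trans hlow) hup 2
  have hexp_lo : (s - aHi / t ^ 2) ^ 2 = κ - β / t ^ 2 - ε / t ^ 2 + (aHi / t ^ 2) ^ 2 := by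
    rw [← hs2]; field_simp; linear_combination (-t ^ 2) * hsHi
  have hexp_hi : (s - aLo / t ^ 2) ^ 2
      = κ - β / t ^ 2 + ε / 2 / t ^ 2 + aLo ^ 2 / t ^ 2 / t ^ 2 := by
    rw [← hs2]; field_simp; linear_combination (-(2 * t ^ 2)) * hsLo
  have hsmall' : aLo ^ 2 / t ^ 2 / t ^ 2 ≤ ε / 2 / t ^ 2 := by
    gcongr ?_ / _; exact (le_abs_self _).trans hsmall.le
  have hhalf : ε / 2 / t ^ 2 + ε / 2 / t ^ 2 = ε / t ^ 2 := by ring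
  rw [abs_le]
  constructor <;> nlinarith [sq_nonneg (aHi / t ^ 2)]

theorem eventually_potential_lt {κ β c p : ℝ} {Rmin S : ℝ → ℝ} (hc : c < β * p ^ 2)
    (hRmin : ∀ᶠ t in atTop, Rmin t = -κ + β / t ^ 2)
    (hS : ∀ ε > 0, ∀ᶠ t in atTop, |S t ^ 2 - (κ - β / t ^ 2)| ≤ ε / t ^ 2) :
    ∀ᶠ t in atTop,
      c / (4 * t ^ 2) - p / 2 * Rmin t + ((p / 2) ^ 2 - p / 2) * S t ^ 2 < p ^ 2 * κ / 4 := by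
  set μ := (p / 2) ^ 2 - p / 2
  set ρ := β * p ^ 2 - c
  have hρ : 0 < ρ := sub_pos.2 hc
  have hε : 0 < ρ / (4 * (|μ| + 1)) := by positivity
  have hμε : |μ| * (ρ / (4 * (|μ| + 1))) < ρ / 4 := by
    rw [mul_div_assoc', div_lt_div_iff₀ (by positivity) (by norm_num)]
    nlinarith [abs_nonneg μ]
  filter_upwards [hRmin, hS _ hε, eventually_gt_atTop 0] with t hR hSt ht
  have key : c / (4 * t ^ 2) - p / 2 * Rmin t + μ * S t ^ 2
      = p ^ 2 * κ / 4 - ρ / 4 / t ^ 2 + μ * (S t ^ 2 - (κ - β / t ^ 2)) := by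
    rw [hR]; field_simp; ring
  have herr : μ * (S t ^ 2 - (κ - β / t ^ 2)) ≤ |μ| * (ρ / (4 * (|μ| + 1))) / t ^ 2 := by
    rw [mul_div_assoc]
    exact (le_abs_self _).trans (by rw [abs_mul]; gcongr)
  have : |μ| * (ρ / (4 * (|μ| + 1))) / t ^ 2 < ρ / 4 / t ^ 2 := by gcongr
  linarith

section Jacobi

variable {Rmin J J' J'' : ℝ → ℝ}

theorem hasDerivAt_div_of_jacobi {t : ℝ} (hJ : HasDerivAt J (J' t) t)
    (hJ' : HasDerivAt J' (J'' t) t) (hODE : J'' t + Rmin t * J t = 0) (hJt : J t ≠ 0) :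
    HasDerivAt (fun x => J' x / J x) (-Rmin t - (J' t / J t) ^ 2) t :=
  (hJ'.div hJ hJt).congr_deriv (by field_simp; linear_combination J t * hODE)

theorem jacobi_mul_deriv_nonneg (hRmin : ∀ t ∈ Ici (0 : ℝ), Rmin t ≤ 0)
    (hJ : ∀ t ∈ Ici (0 : ℝ), HasDerivWithinAt J (J' t) (Ici 0) t)
    (hJ' : ∀ t ∈ Ici (0 : ℝ), HasDerivWithinAt J' (J'' t) (Ici 0) t)
    (hODE : ∀ t ∈ Ici (0 : ℝ), J'' t + Rmin t * J t = 0) (hJ0 : J 0 = 0) :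
    ∀ t ≥ 0, 0 ≤ J t * J' t := by
  have hmono : MonotoneOn (fun t => J t * J' t) (Ici 0) := by
    refine monotoneOn_of_hasDerivWithinAt_nonneg (f' := fun t => J' t * J' t + J t * J'' t)
      (convex_Ici 0) (fun t ht => ((hJ t ht).mul (hJ' t ht)).continuousWithinAt)
      (fun t ht => ((hJ t (interior_subset ht)).mul (hJ' t (interior_subset ht))).mono
        interior_subset) fun t ht => ?_
    have ht : 0 ≤ t := interior_subset ht
    have : J t * J'' t = -Rmin t * J t ^ 2 := by linear_combination J t * hODE t ht
    nlinarith [hRmin t ht, mul_self_nonneg (J' t), sq_nonneg (J t)]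
  intro t ht
  simpa [hJ0] using hmono self_mem_Ici ht ht

theorem jacobi_pos (hRmin : ∀ t ∈ Ici (0 : ℝ), Rmin t ≤ 0)
    (hJ : ∀ t ∈ Ici (0 : ℝ), HasDerivWithinAt J (J' t) (Ici 0) t)
    (hJ' : ∀ t ∈ Ici (0 : ℝ), HasDerivWithinAt J' (J'' t) (Ici 0) t)
    (hODE : ∀ t ∈ Ici (0 : ℝ), J'' t + Rmin t * J t = 0) (hJ0 : J 0 = 0) (hJ'0 : J' 0 = 1) :
    ∀ t > 0, 0 < J t := by
  have hsq : MonotoneOn (fun t => J t ^ 2) (Ici 0) := by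
    refine monotoneOn_of_hasDerivWithinAt_nonneg (f' := fun t => 2 * (J t * J' t))
      (convex_Ici 0) (fun t ht => ((hJ t ht).pow 2).continuousWithinAt)
      (fun t ht => (((hJ t (interior_subset ht)).pow 2).mono interior_subset).congr_deriv
        (by ring)) fun t ht => ?_
    have := jacobi_mul_deriv_nonneg hRmin hJ hJ' hODE hJ0 t (interior_subset ht)
    positivity
  intro t ht
  -- `J(s)/s → J'(0) = 1` as `s → 0⁺`, so `J` is positive somewhere in `(0, t)`.
  have hslope : Tendsto (slope J 0) (𝓝[>] 0) (𝓝 1) :=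
    (hasDerivWithinAt_iff_tendsto_slope' (lt_irrefl 0)).1
      (hJ'0 ▸ (hJ 0 self_mem_Ici).mono Ioi_subset_Ici_self)
  obtain ⟨s, hs_slope, hst, hs⟩ := ((hslope.eventually (lt_mem_nhds one_pos)).and
    ((eventually_nhdsWithin_of_eventually_nhds (eventually_lt_nhds ht)).and
      self_mem_nhdsWithin)).exists
  have hJs : 0 < J s := by
    rw [slope_def_field, hJ0, sub_zero, sub_zero] at hs_slope
    exact (div_pos_iff_of_pos_right hs).1 hs_slope
  by_contra! hJt
  obtain ⟨z, hz, hJz⟩ := intermediate_value_Icc' hst.le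
    (fun x hx => (hJ x (hs.le.trans hx.1)).continuousWithinAt.mono
      (Icc_subset_Ici_self.trans (Ici_subset_Ici.2 hs.le))) ⟨hJt, hJs.le⟩
  have := hsq (mem_Ici.2 hs.le) (mem_Ici.2 (hs.le.trans hz.1)) hz.1
  simp only [hJz] at this
  nlinarith

end Jacobi

theorem sq_mul_rpow_neg_half_mul_rpow (u : ℝ) {j : ℝ} (p : ℝ) (hj : 0 < j) :
    (u * j ^ (-(p / 2))) ^ 2 * j ^ p = u ^ 2 := by
  rw [mul_pow, mul_assoc, sq (j ^ _), ← rpow_add hj, ← rpow_add hj]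
  ring_nf
  simp

theorem hasDerivAt_mul_rpow_neg_half {φ J : ℝ → ℝ} {φ' J' x : ℝ} (p : ℝ) (hφ : HasDerivAt φ φ' x)
    (hJ : HasDerivAt J J' x) (hJx : 0 < J x) :
    HasDerivAt (fun y => φ y * J y ^ (-(p / 2)))
      ((φ' - p / 2 * (J' / J x) * φ x) * J x ^ (-(p / 2))) x :=
  (hφ.mul (hJ.rpow_const (Or.inl hJx.ne'))).congr_deriv (by
    rw [rpow_sub_one hJx.ne']; field_simp; ring)

theorem integral_sq_sub_mul_eq_of_eq_zero {a b m : ℝ} {φ φ' φ'' S S' : ℝ → ℝ} (hab : a ≤ b)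
    (hφ : ∀ x ∈ Icc a b, HasDerivWithinAt φ (φ' x) (Icc a b) x)
    (hφ' : ∀ x ∈ Icc a b, HasDerivWithinAt φ' (φ'' x) (Icc a b) x)
    (hφ'' : ContinuousOn φ'' (Icc a b))
    (hS : ∀ x ∈ Icc a b, HasDerivWithinAt S (S' x) (Icc a b) x) (hS' : ContinuousOn S' (Icc a b))
    (ha : φ a = 0) (hb : φ b = 0) :
    ∫ x in a..b, (φ' x - m * S x * φ x) ^ 2
      = ∫ x in a..b, ((m * S' x + m ^ 2 * S x ^ 2) * φ x ^ 2 - φ x * φ'' x) := by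
  have hφc : ContinuousOn φ (Icc a b) := fun x hx => (hφ x hx).continuousWithinAt
  have hφ'c : ContinuousOn φ' (Icc a b) := fun x hx => (hφ' x hx).continuousWithinAt
  have hSc : ContinuousOn S (Icc a b) := fun x hx => (hS x hx).continuousWithinAt
  have hφ2 : ∀ x ∈ Icc a b, HasDerivWithinAt (fun y => φ y ^ 2) (2 * φ x * φ' x) (Icc a b) x :=
    fun x hx => ((hφ x hx).pow 2).congr_deriv (by ring)
  rw [← uIcc_of_le hab] at hφ hφ' hφ2 hS
  have ibp₁ : ∫ x in a..b, φ' x * φ' x + φ x * φ'' x = 0 := by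
    simpa [ha, hb] using integral_deriv_mul_eq_sub_of_hasDerivWithinAt hφ hφ'
      (hφ'c.intervalIntegrable_of_Icc hab) (hφ''.intervalIntegrable_of_Icc hab)
  have ibp₂ : ∫ x in a..b, 2 * φ x * φ' x * S x + φ x ^ 2 * S' x = 0 := by
    simpa [ha, hb] using integral_deriv_mul_eq_sub_of_hasDerivWithinAt hφ2 hS
      (((continuousOn_const.mul hφc).mul hφ'c).intervalIntegrable_of_Icc hab)
      (hS'.intervalIntegrable_of_Icc hab)
  have integrable : ∀ {f : ℝ → ℝ}, ContinuousOn f (Icc a b) →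
      IntervalIntegrable f MeasureTheory.volume a b :=
    fun hf => hf.intervalIntegrable_of_Icc hab
  calc ∫ x in a..b, (φ' x - m * S x * φ x) ^ 2
      = ∫ x in a..b, ((φ' x * φ' x + φ x * φ'' x) - m * (2 * φ x * φ' x * S x + φ x ^ 2 * S' x)
          + ((m * S' x + m ^ 2 * S x ^ 2) * φ x ^ 2 - φ x * φ'' x)) :=
        integral_congr fun x _ => by ring
    _ = (∫ x in a..b, φ' x * φ' x + φ x * φ'' x)
          - m * (∫ x in a..b, 2 * φ x * φ' x * S x + φ x ^ 2 * S' x)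
          + ∫ x in a..b, ((m * S' x + m ^ 2 * S x ^ 2) * φ x ^ 2 - φ x * φ'' x) := by
        rw [integral_add, integral_sub, integral_const_mul] <;> exact integrable (by fun_prop)
    _ = _ := by rw [ibp₁, ibp₂]; ring

theorem integral_mul_sq_lt_of_lt {a b c : ℝ} {V φ : ℝ → ℝ} (hab : a < b)
    (hV : ContinuousOn V (Icc a b)) (hφ : ContinuousOn φ (Icc a b))
    (hVc : ∀ x ∈ Icc a b, V x < c) (hφ0 : ∃ x ∈ Icc a b, φ x ≠ 0) :
    ∫ x in a..b, V x * φ x ^ 2 < c * ∫ x in a..b, φ x ^ 2 := by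
  rw [← integral_const_mul]
  refine integral_lt_integral_of_continuousOn_of_le_of_exists_lt hab (hV.mul (hφ.pow 2))
    (continuousOn_const.mul (hφ.pow 2))
    (fun x hx => by gcongr; exact (hVc x (Ioc_subset_Icc_self hx)).le) ?_
  obtain ⟨x, hx, hφx⟩ := hφ0
  exact ⟨x, hx, mul_lt_mul_of_pos_right (hVc x hx) (by positivity)⟩

theorem integral_sq_deriv_weighted_lt {a b c p K lam : ℝ} {Rmin J J' φ φ' φ'' : ℝ → ℝ}
    (hab : a < b) (ha : 0 < a) (hRmin : ContinuousOn Rmin (Icc a b))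
    (hJ : ∀ x ∈ Icc a b, HasDerivAt J (J' x) x) (hJpos : ∀ x ∈ Icc a b, 0 < J x)
    (hS : ∀ x ∈ Icc a b, HasDerivAt (fun y => J' y / J y) (-Rmin x - (J' x / J x) ^ 2) x)
    (hV : ∀ x ∈ Icc a b, c / (4 * x ^ 2) - p / 2 * Rmin x
      + ((p / 2) ^ 2 - p / 2) * (J' x / J x) ^ 2 < p ^ 2 * K / 4)
    (hφ : ∀ x ∈ Icc a b, HasDerivWithinAt φ (φ' x) (Icc a b) x)
    (hφ' : ∀ x ∈ Icc a b, HasDerivWithinAt φ' (φ'' x) (Icc a b) x)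
    (hφ'' : ContinuousOn φ'' (Icc a b))
    (hODE : ∀ x ∈ Icc a b, -φ'' x - c / (4 * x ^ 2) * φ x = -lam * φ x)
    (hφa : φ a = 0) (hφb : φ b = 0) (hφ0 : ∃ x ∈ Icc a b, φ x ≠ 0) :
    (∫ x in a..b, (deriv (fun y => φ y * J y ^ (-(p / 2))) x) ^ 2 * J x ^ p)
      < (p ^ 2 * K / 4 - lam) * ∫ x in a..b, (φ x * J x ^ (-(p / 2))) ^ 2 * J x ^ p := by
  have hSc : ContinuousOn (fun y => J' y / J y) (Icc a b) :=
    fun x hx => (hS x hx).continuousAt.continuousWithinAt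
  have hφc : ContinuousOn φ (Icc a b) := fun x hx => (hφ x hx).continuousWithinAt
  have hlhs : ∫ x in a..b, (deriv (fun y => φ y * J y ^ (-(p / 2))) x) ^ 2 * J x ^ p
      = ∫ x in a..b, (φ' x - p / 2 * (J' x / J x) * φ x) ^ 2 := by
    refine integral_congr_Ioo_of_le hab.le fun x hx => ?_
    have hx' := Ioo_subset_Icc_self hx
    have hφx := (hφ x hx').hasDerivAt (Icc_mem_nhds hx.1 hx.2)
    rw [(hasDerivAt_mul_rpow_neg_half p hφx (hJ x hx') (hJpos x hx')).deriv,
      sq_mul_rpow_neg_half_mul_rpow _ p (hJpos x hx')]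
  have hrhs : ∫ x in a..b, (φ x * J x ^ (-(p / 2))) ^ 2 * J x ^ p = ∫ x in a..b, φ x ^ 2 :=
    integral_congr fun x hx =>
      sq_mul_rpow_neg_half_mul_rpow _ p (hJpos x (by rwa [uIcc_of_le hab.le] at hx))
  rw [hlhs, hrhs, integral_sq_sub_mul_eq_of_eq_zero hab.le hφ hφ' hφ''
    (fun x hx => (hS x hx).hasDerivWithinAt) (by fun_prop) hφa hφb]
  have hpot : ∫ x in a..b, ((p / 2 * (-Rmin x - (J' x / J x) ^ 2)
        + (p / 2) ^ 2 * (J' x / J x) ^ 2) * φ x ^ 2 - φ x * φ'' x)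
      = ∫ x in a..b, (c / (4 * x ^ 2) - p / 2 * Rmin x
        + ((p / 2) ^ 2 - p / 2) * (J' x / J x) ^ 2 - lam) * φ x ^ 2 :=
    integral_congr fun x hx => by
      linear_combination φ x * hODE x (by rwa [uIcc_of_le hab.le] at hx)
  rw [hpot]
  refine integral_mul_sq_lt_of_lt hab ?_ hφc (fun x hx => by linarith [hV x hx]) hφ0
  have : ContinuousOn (fun x : ℝ => c / (4 * x ^ 2)) (Icc a b) :=
    continuousOn_const.div (by fun_prop) fun x hx => by nlinarith [hx.1]
  fun_prop

theorem stmt_7_general (n : ℕ) (κ β δ R₁ : ℝ)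
    (hκ : 0 < κ) (hδ : 0 < δ) (hβδ : β * ((n : ℝ) - 1) ^ 2 > 1 + δ)
    (Rmin J J' J'' : ℝ → ℝ)
    (hRmin_cont : ContinuousOn Rmin (Ici 0))
    (hRmin_nonpos : ∀ t ∈ Ici (0 : ℝ), Rmin t ≤ 0)
    (hRmin_eq : ∀ t ≥ R₁, Rmin t = -κ + β / t ^ 2)
    (hJ' : ∀ t ∈ Ici (0 : ℝ), HasDerivWithinAt J (J' t) (Ici 0) t)
    (hJ'' : ∀ t ∈ Ici (0 : ℝ), HasDerivWithinAt J' (J'' t) (Ici 0) t)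
    (hODE : ∀ t ∈ Ici (0 : ℝ), J'' t + Rmin t * J t = 0)
    (hJ0 : J 0 = 0) (hJ'0 : J' 0 = 1) :
    ∃ R₀ > (0 : ℝ), ∀ R ≥ R₀, ∀ k > (2 : ℝ), ∀ lam₁ > (0 : ℝ),
      ∀ φ₁ φ₁' φ₁'' : ℝ → ℝ,
      (∀ x ∈ Icc R (2 * k * R), HasDerivWithinAt φ₁ (φ₁' x) (Icc R (2 * k * R)) x) →
      (∀ x ∈ Icc R (2 * k * R), HasDerivWithinAt φ₁' (φ₁'' x) (Icc R (2 * k * R)) x) →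
      ContinuousOn φ₁'' (Icc R (2 * k * R)) →
      (∀ x ∈ Icc R (2 * k * R),
        -φ₁'' x - (1 + δ) / (4 * x ^ 2) * φ₁ x = -lam₁ * φ₁ x) →
      φ₁ R = 0 → φ₁ (2 * k * R) = 0 →
      (∃ x ∈ Icc R (2 * k * R), φ₁ x ≠ 0) →
      (∫ x in R..(2 * k * R),
          (deriv (fun y => φ₁ y * J y ^ (-(((n : ℝ) - 1) / 2))) x) ^ 2
            * J x ^ ((n : ℝ) - 1))
        < (((n : ℝ) - 1) ^ 2 * κ / 4 - lam₁) *
          ∫ x in R..(2 * k * R),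
            (φ₁ x * J x ^ (-(((n : ℝ) - 1) / 2))) ^ 2 * J x ^ ((n : ℝ) - 1) := by
  have hJpos := jacobi_pos hRmin_nonpos hJ' hJ'' hODE hJ0 hJ'0
  have hJat : ∀ t > 0, HasDerivAt J (J' t) t :=
    fun t ht => (hJ' t ht.le).hasDerivAt (Ici_mem_nhds ht)
  have hS : ∀ t > 0, HasDerivAt (fun y => J' y / J y) (-Rmin t - (J' t / J t) ^ 2) t :=
    fun t ht => hasDerivAt_div_of_jacobi (hJat t ht) ((hJ'' t ht.le).hasDerivAt (Ici_mem_nhds ht))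
      (hODE t ht.le) (hJpos t ht).ne'
  have hRmin_ev : ∀ᶠ t in atTop, Rmin t = -κ + β / t ^ 2 := eventually_atTop.2 ⟨R₁, hRmin_eq⟩
  have hriccati : ∀ᶠ t in atTop,
      HasDerivAt (fun y => J' y / J y) (κ - β / t ^ 2 - (J' t / J t) ^ 2) t := by
    filter_upwards [hRmin_ev, eventually_gt_atTop 0] with t hR ht
    exact (hS t ht).congr_deriv (by rw [hR]; ring)
  have hS0 : ∀ᶠ t in atTop, 0 ≤ J' t / J t := by
    filter_upwards [eventually_gt_atTop 0] with t ht
    have := jacobi_mul_deriv_nonneg hRmin_nonpos hJ' hJ'' hODE hJ0 t ht.le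
    exact div_nonneg ((mul_nonneg_iff_of_pos_left (hJpos t ht)).1 this) (hJpos t ht).le
  have hβ : 0 ≤ β := by nlinarith [sq_nonneg ((n : ℝ) - 1), hδ]
  obtain ⟨R₀, hR₀⟩ := eventually_atTop.1 (eventually_potential_lt hβδ hRmin_ev
    fun ε hε => eventually_abs_sq_sub_le_of_riccati hκ hβ hriccati hS0 hε)
  refine ⟨max R₀ 1, by positivity,
    fun R hR k hk lam₁ _ φ₁ φ₁' φ₁'' hφ hφ' hφ'' hφODE hφa hφb hφ0 => ?_⟩
  have hR0 : 0 < R := lt_of_lt_of_le one_pos (le_of_max_le_right hR)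
  have hpos : ∀ x ∈ Icc R (2 * k * R), 0 < x := fun x hx => hR0.trans_le hx.1
  exact integral_sq_deriv_weighted_lt (by nlinarith) hR0
    (hRmin_cont.mono fun x hx => (hpos x hx).le) (fun x hx => hJat x (hpos x hx))
    (fun x hx => hJpos x (hpos x hx)) (fun x hx => hS x (hpos x hx))
    (fun x hx => hR₀ x ((le_of_max_le_left hR).trans hx.1)) hφ hφ' hφ'' hφODE hφa hφb hφ0

/-- inequality (7), core of Proposition 2.2 of the paper. Let `n ≥ 2`,
`κ > 0` and `β, δ > 0` with `β(n-1)² > 1 + δ`. Let `R_min ≤ 0` be continuous on `[0,∞)`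
with `R_min(t) = -κ + β/t²` for `t ≥ R₁` (where `R₁ > 0`, `R₁² ≥ β/κ`), and let `J` solve
the Jacobi equation `J'' + R_min·J = 0`, `J(0) = 0`, `J'(0) = 1`. Then there is `R₀ > 0`
such that for every `R ≥ R₀`, `k > 2`, `λ₁ > 0` and every nontrivial C² solution `φ₁` of
`-φ₁'' - (1+δ)/(4x²)·φ₁ = -λ₁·φ₁` on `[R, 2kR]` with `φ₁(R) = φ₁(2kR) = 0`, the function
`f = φ₁·J^{-(n-1)/2}` satisfies
`∫_R^{2kR} |f'|²·J^{n-1} dx < ((n-1)²κ/4 - λ₁)·∫_R^{2kR} |f|²·J^{n-1} dx`. -/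
theorem stmt_7 (n : ℕ) (hn : 2 ≤ n) (κ β δ R₁ : ℝ)
    (hκ : 0 < κ) (hδ : 0 < δ) (hβδ : β * ((n : ℝ) - 1) ^ 2 > 1 + δ)
    (hR₁ : 0 < R₁) (hR₁β : R₁ ^ 2 ≥ β / κ)
    (Rmin J J' J'' : ℝ → ℝ)
    (hRmin_cont : ContinuousOn Rmin (Ici 0))
    (hRmin_nonpos : ∀ t ∈ Ici (0 : ℝ), Rmin t ≤ 0)
    (hRmin_eq : ∀ t ≥ R₁, Rmin t = -κ + β / t ^ 2)
    (hJ' : ∀ t ∈ Ici (0 : ℝ), HasDerivWithinAt J (J' t) (Ici 0) t)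
    (hJ'' : ∀ t ∈ Ici (0 : ℝ), HasDerivWithinAt J' (J'' t) (Ici 0) t)
    (hJ''cont : ContinuousOn J'' (Ici 0))
    (hODE : ∀ t ∈ Ici (0 : ℝ), J'' t + Rmin t * J t = 0)
    (hJ0 : J 0 = 0) (hJ'0 : J' 0 = 1) :
    ∃ R₀ > (0 : ℝ), ∀ R ≥ R₀, ∀ k > (2 : ℝ), ∀ lam₁ > (0 : ℝ),
      ∀ φ₁ φ₁' φ₁'' : ℝ → ℝ,
      (∀ x ∈ Icc R (2 * k * R), HasDerivWithinAt φ₁ (φ₁' x) (Icc R (2 * k * R)) x) →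
      (∀ x ∈ Icc R (2 * k * R), HasDerivWithinAt φ₁' (φ₁'' x) (Icc R (2 * k * R)) x) →
      ContinuousOn φ₁'' (Icc R (2 * k * R)) →
      (∀ x ∈ Icc R (2 * k * R),
        -φ₁'' x - (1 + δ) / (4 * x ^ 2) * φ₁ x = -lam₁ * φ₁ x) →
      φ₁ R = 0 → φ₁ (2 * k * R) = 0 →
      (∃ x ∈ Icc R (2 * k * R), φ₁ x ≠ 0) →
      (∫ x in R..(2 * k * R),
          (deriv (fun y => φ₁ y * J y ^ (-(((n : ℝ) - 1) / 2))) x) ^ 2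
            * J x ^ ((n : ℝ) - 1))
        < (((n : ℝ) - 1) ^ 2 * κ / 4 - lam₁) *
          ∫ x in R..(2 * k * R),
            (φ₁ x * J x ^ (-(((n : ℝ) - 1) / 2))) ^ 2 * J x ^ ((n : ℝ) - 1) :=
  stmt_7_general n κ β δ R₁ hκ hδ hβδ Rmin J J' J'' hRmin_cont hRmin_nonpos hRmin_eq hJ' hJ'' hODE
    hJ0 hJ'0
end

section
/- Let n ≥ 2 be an integer, κ > 0, and let β satisfy 0 < β < 1/(n−1)². Let R₀ > 0 with R₀² ≥ β/κ, and let K : [0, ∞) → ℝ be a continuous function with K(r) ≤ 0 for all r ≥ 0 and K(r) = −κ + β/r² for all r ≥ R₀. Let h : [0, ∞) → ℝ be the C² solution of h''(r) + K(r)·h(r) = 0 with h(0) = 0, h'(0) = 1, and set A(r) = h'(r)/h(r) for r > 0. Then there exists R₁ > R₀ such that for all r ≥ R₁: 1/(4r²) + ((n−1)(n−3)/4)·A(r)² − ((n−1)/2)·K(r) ≥ (n−1)²κ/4. -/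
open Set Real Filter Topology

/-!
While `h > 0`, `h'' = -K h ≥ 0`, so `h` stays above its tangent line `r` at `0`; hence `h ≥ r`.
For `r ≥ R₀` the equation reads `h'' = (q² - β / r²) h` with `q = √κ`. For the trial logarithmic
derivative `φ = q - a / r²` and a primitive `ψ = q r + a / r` of `φ`, the function
`(h' - φ h) e^ψ` has derivative `(q² - β / r² - φ' - φ²) h e^ψ`, whose sign for large `r` is that
of `2 q a - β`, and whose size is eventually at least `1` because `h e^ψ` grows exponentially.
So `h' - φ h` is eventually of one sign, and `A = h' / h` is squeezed between `q - a / r²` for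
all `a` on either side of `β / (2q)`: `r² (A - q) → -β / (2q)`, i.e. `r² (A² - κ) → -β`.
After the `κ`-terms cancel, `r²` times the difference of the two sides of the inequality is
`(1 - (n-1)² β) / 4 + (n-1)(n-3)/4 · (r² (A² - κ) + β)`, which tends to `(1 - (n-1)² β) / 4 > 0`.
-/

theorem monotoneOn_Icc_of_hasDerivWithinAt_nonneg {f f' : ℝ → ℝ} {a b : ℝ}
    (hf : ∀ x ∈ Icc a b, HasDerivWithinAt f (f' x) (Icc a b) x)
    (hf' : ∀ x ∈ Ioo a b, 0 ≤ f' x) : MonotoneOn f (Icc a b) :=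
  monotoneOn_of_hasDerivWithinAt_nonneg (convex_Icc a b)
    (fun x hx => (hf x hx).continuousWithinAt)
    (fun x hx => (hf x (interior_subset hx)).mono interior_subset) (by rwa [interior_Icc])

theorem add_mul_sub_le_of_hasDerivWithinAt_Icc {f f' f'' : ℝ → ℝ} {a b : ℝ}
    (hf : ∀ x ∈ Icc a b, HasDerivWithinAt f (f' x) (Icc a b) x)
    (hf' : ∀ x ∈ Icc a b, HasDerivWithinAt f' (f'' x) (Icc a b) x)
    (hf'' : ∀ x ∈ Ioo a b, 0 ≤ f'' x) :
    ∀ x ∈ Icc a b, f a + f' a * (x - a) ≤ f x := by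
  have hf'_mono := monotoneOn_Icc_of_hasDerivWithinAt_nonneg hf' hf''
  have hg : ∀ x ∈ Icc a b, HasDerivWithinAt (fun x => f x - f' a * (x - a))
      (f' x - f' a) (Icc a b) x := fun x hx =>
    (hf x hx).sub (((hasDerivWithinAt_id x _).sub_const a).const_mul (f' a))
      |>.congr_deriv (by ring)
  have hg_mono := monotoneOn_Icc_of_hasDerivWithinAt_nonneg hg fun x hx =>
    sub_nonneg.2 (hf'_mono (left_mem_Icc.2 (hx.1.trans hx.2).le) (Ioo_subset_Icc_self hx) hx.1.le)
  intro x hx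
  have := hg_mono (left_mem_Icc.2 (hx.1.trans hx.2)) hx hx.1
  simp only [sub_self, mul_zero, sub_zero] at this
  linarith

theorem self_le_of_deriv2_add_mul_eq_zero {K h h' h'' : ℝ → ℝ}
    (hK : ∀ r ∈ Ici (0 : ℝ), K r ≤ 0)
    (hh' : ∀ r ∈ Ici (0 : ℝ), HasDerivWithinAt h (h' r) (Ici 0) r)
    (hh'' : ∀ r ∈ Ici (0 : ℝ), HasDerivWithinAt h' (h'' r) (Ici 0) r)
    (hODE : ∀ r ∈ Ici (0 : ℝ), h'' r + K r * h r = 0)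
    (hh0 : h 0 = 0) (hh'0 : h' 0 = 1) :
    ∀ r ∈ Ici (0 : ℝ), r ≤ h r := by
  have self_le : ∀ s, (∀ x ∈ Ioo 0 s, 0 ≤ h x) → ∀ x ∈ Icc 0 s, x ≤ h x := fun s hs x hx => by
    have := add_mul_sub_le_of_hasDerivWithinAt_Icc
      (fun x hx => (hh' x hx.1).mono Icc_subset_Ici_self)
      (fun x hx => (hh'' x hx.1).mono Icc_subset_Ici_self)
      (fun x hx => by nlinarith [hODE x hx.1.le, hK x hx.1.le, hs x hx]) x hx
    simpa [hh0, hh'0] using this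
  have hslope : Tendsto (slope h 0) (𝓝[>] 0) (𝓝 1) := by
    simpa [hh'0] using (hasDerivWithinAt_iff_tendsto_slope' (s := Ioi 0) (by simp)).1
      ((hh' 0 self_mem_Ici).mono Ioi_subset_Ici_self)
  obtain ⟨δ, hδ, hδh⟩ := (nhdsGT_basis (0 : ℝ)).eventually_iff.1
    (hslope.eventually (eventually_gt_nhds one_pos))
  have hpos_near : ∀ x ∈ Ioo 0 δ, 0 < h x := fun x hx => by
    have := hδh hx
    rw [slope_def_field, hh0, sub_zero, sub_zero] at this
    exact (div_pos_iff_of_pos_right hx.1).1 this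
  have hpos : ∀ r ∈ Ioi (0 : ℝ), 0 < h r := by
    by_contra! ⟨r₀, hr₀, hhr₀⟩
    have hcont : ContinuousOn h (Ici 0) := fun x hx => (hh' x hx).continuousWithinAt
    have hδr₀ : δ / 2 ≤ r₀ := by
      by_contra! hlt
      exact (hpos_near r₀ ⟨hr₀, by linarith⟩).not_ge hhr₀
    have hZ : IsCompact (Icc (δ / 2) r₀ ∩ h ⁻¹' Iic 0) := isCompact_Icc.of_isClosed_subset
      ((hcont.mono (Icc_subset_Ici_iff hδr₀ |>.2 (by linarith))).preimage_isClosed_of_isClosed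
        isClosed_Icc isClosed_Iic) inter_subset_left
    -- the first zero `s` of `h` after `δ / 2`
    obtain ⟨s, ⟨⟨hδs, hsr₀⟩, hhs⟩, hs_least⟩ := hZ.exists_isLeast ⟨r₀, ⟨hδr₀, le_rfl⟩, hhr₀⟩
    have hh_pos : ∀ x ∈ Ioo 0 s, 0 ≤ h x := fun x hx => by
      by_contra! hhx
      rcases lt_or_ge x δ with hxδ | hδx
      · exact (hpos_near x ⟨hx.1, hxδ⟩).not_gt hhx
      · exact hx.2.not_ge (hs_least ⟨⟨by linarith, hx.2.le.trans hsr₀⟩, hhx.le⟩)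
    have := self_le s hh_pos s (right_mem_Icc.2 (by linarith))
    exact absurd (hhs.trans' this) (by simp; linarith)
  exact fun r hr => self_le r (fun x hx => (hpos x hx.1).le) r (right_mem_Icc.2 hr)

theorem eventually_nonpos_of_hasDerivAt_le_neg_one {G G' : ℝ → ℝ}
    (hG : ∀ᶠ r in atTop, HasDerivAt G (G' r) r) (hG' : ∀ᶠ r in atTop, G' r ≤ -1) :
    ∀ᶠ r in atTop, G r ≤ 0 := by
  obtain ⟨a, ha⟩ := eventually_atTop.1 (hG.and hG')
  have hanti : AntitoneOn (fun r => G r + r) (Ici a) :=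
    antitoneOn_of_hasDerivWithinAt_nonpos (convex_Ici a) (f' := fun r => G' r + 1)
      (fun r hr => ((ha r hr).1.add (hasDerivAt_id r)).continuousAt.continuousWithinAt)
      (fun r hr => ((ha r (interior_subset hr)).1.add (hasDerivAt_id r)).hasDerivWithinAt)
      (fun r hr => by linarith [(ha r (interior_subset hr)).2])
  filter_upwards [eventually_ge_atTop (a + |G a|)] with r hr
  have := hanti self_mem_Ici (show a ≤ r by linarith [abs_nonneg (G a)])
    (by linarith [abs_nonneg (G a)])
  linarith [le_abs_self (G a)]

theorem hasDerivAt_sub_mul_mul_exp {h h' φ ψ : ℝ → ℝ} {V φ' r : ℝ}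
    (hh : HasDerivAt h (h' r) r) (hh' : HasDerivAt h' (V * h r) r)
    (hφ : HasDerivAt φ φ' r) (hψ : HasDerivAt ψ (φ r) r) :
    HasDerivAt (fun r => (h' r - φ r * h r) * exp (ψ r))
      ((V - φ' - φ r ^ 2) * (h r * exp (ψ r))) r := by
  refine ((hh'.sub (hφ.mul hh)).mul hψ.exp).congr_deriv ?_
  simp only [Pi.sub_apply, Pi.mul_apply]
  ring

/-- The defect `V - φ' - φ²` of `φ r = q - a / r²` in the Riccati equation `A' + A² = V` of
`A = h' / h`, for `V r = q² - β / r²`. -/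
noncomputable def riccatiDefect (q β a r : ℝ) : ℝ :=
  q ^ 2 - β / r ^ 2 - 2 * a / r ^ 3 - (q - a / r ^ 2) ^ 2

theorem tendsto_sq_mul_riccatiDefect (q β a : ℝ) :
    Tendsto (fun r => r ^ 2 * riccatiDefect q β a r) atTop (𝓝 (2 * q * a - β)) := by
  have hlim : Tendsto (fun r : ℝ => 2 * q * a - β - 2 * a * r⁻¹ - a ^ 2 * r⁻¹ ^ 2) atTop
      (𝓝 (2 * q * a - β - 2 * a * 0 - a ^ 2 * 0 ^ 2)) :=
    ((tendsto_const_nhds.sub (tendsto_inv_atTop_zero.const_mul _)).sub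
      ((tendsto_inv_atTop_zero.pow 2).const_mul _))
  simp only [mul_zero, sub_zero, ne_eq, OfNat.ofNat_ne_zero, not_false_eq_true, zero_pow] at hlim
  refine hlim.congr' ?_
  filter_upwards [eventually_ne_atTop 0] with r hr
  unfold riccatiDefect
  field_simp
  ring

theorem hasDerivAt_barrier {h h' : ℝ → ℝ} {q β a r : ℝ} (hr : r ≠ 0)
    (hh : HasDerivAt h (h' r) r) (hh' : HasDerivAt h' ((q ^ 2 - β / r ^ 2) * h r) r) :
    HasDerivAt (fun r => (h' r - (q - a / r ^ 2) * h r) * exp (q * r + a / r))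
      (riccatiDefect q β a r * (h r * exp (q * r + a / r))) r := by
  have hφ : HasDerivAt (fun r => q - a / r ^ 2) (2 * a / r ^ 3) r :=
    ((hasDerivAt_const r a).div (hasDerivAt_pow 2 r) (pow_ne_zero 2 hr)).const_sub q
      |>.congr_deriv (by field_simp; ring)
  have hψ : HasDerivAt (fun r => q * r + a / r) (q - a / r ^ 2) r :=
    ((hasDerivAt_id' r).const_mul q).add ((hasDerivAt_const r a).div (hasDerivAt_id' r) hr)
      |>.congr_deriv (by field_simp; ring)
  exact hasDerivAt_sub_mul_mul_exp hh hh' hφ hψ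

theorem eventually_one_le_div_sq_mul_exp {h : ℝ → ℝ} {q a ε : ℝ} (hq : 0 < q) (ha : 0 ≤ a)
    (hε : 0 < ε) (hge : ∀ᶠ r in atTop, r ≤ h r) :
    ∀ᶠ r in atTop, 1 ≤ ε / r ^ 2 * (h r * exp (q * r + a / r)) := by
  filter_upwards [hge, eventually_ge_atTop (max 1 (2 / (ε * q ^ 2)))] with r hhr hr
  have hr0 : 0 < r := by linarith [le_of_max_le_left hr]
  have hexp : (q * r) ^ 2 / 2 ≤ exp (q * r + a / r) := by
    have := pow_div_factorial_le_exp (q * r) (by positivity) 2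
    norm_num at this
    exact this.trans (exp_le_exp.2 (by linarith [div_nonneg ha hr0.le]))
  have hεqr : 2 ≤ ε * q ^ 2 * r := by
    have := (div_le_iff₀ (by positivity)).1 (le_of_max_le_right hr)
    linarith
  calc 1 ≤ ε / r ^ 2 * (r * ((q * r) ^ 2 / 2)) := by
        field_simp
        nlinarith
    _ ≤ ε / r ^ 2 * (h r * exp (q * r + a / r)) := by
        gcongr
        exact hr0.le.trans hhr

theorem eventually_deriv_le_of_two_mul_lt {h h' : ℝ → ℝ} {q β a : ℝ} (hq : 0 < q) (ha : 0 ≤ a)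
    (hqa : 2 * q * a < β) (hh : ∀ᶠ r in atTop, HasDerivAt h (h' r) r)
    (hh' : ∀ᶠ r in atTop, HasDerivAt h' ((q ^ 2 - β / r ^ 2) * h r) r)
    (hge : ∀ᶠ r in atTop, r ≤ h r) :
    ∀ᶠ r in atTop, h' r ≤ (q - a / r ^ 2) * h r := by
  set ε := (β - 2 * q * a) / 2
  have hε : 0 < ε := by simp only [ε]; linarith
  have hdefect : ∀ᶠ r in atTop, r ^ 2 * riccatiDefect q β a r ≤ -ε :=
    (tendsto_sq_mul_riccatiDefect q β a).eventually
      (eventually_le_nhds (by simp only [ε]; linarith))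
  have hG := eventually_nonpos_of_hasDerivAt_le_neg_one
    (G := fun r => (h' r - (q - a / r ^ 2) * h r) * exp (q * r + a / r))
    (by filter_upwards [hh, hh', eventually_ne_atTop 0] with r hhr hh'r hr
        exact hasDerivAt_barrier hr hhr hh'r)
    (by filter_upwards [hdefect, eventually_one_le_div_sq_mul_exp hq ha hε hge, hge,
          eventually_gt_atTop 0] with r hP hgrowth hhr hr
        have hP' : riccatiDefect q β a r ≤ -(ε / r ^ 2) := by
          rw [le_neg, div_le_iff₀ (by positivity)]; linarith
        calc _ ≤ -(ε / r ^ 2) * (h r * exp (q * r + a / r)) :=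
              mul_le_mul_of_nonneg_right hP' (mul_nonneg (hr.le.trans hhr) (exp_pos _).le)
          _ ≤ -1 := by linarith)
  filter_upwards [hG] with r hr
  linarith [nonpos_of_mul_nonpos_left hr (exp_pos _)]

theorem eventually_le_deriv_of_lt_two_mul {h h' : ℝ → ℝ} {q β a : ℝ} (hq : 0 < q) (ha : 0 ≤ a)
    (hqa : β < 2 * q * a) (hh : ∀ᶠ r in atTop, HasDerivAt h (h' r) r)
    (hh' : ∀ᶠ r in atTop, HasDerivAt h' ((q ^ 2 - β / r ^ 2) * h r) r)
    (hge : ∀ᶠ r in atTop, r ≤ h r) :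
    ∀ᶠ r in atTop, (q - a / r ^ 2) * h r ≤ h' r := by
  set ε := (2 * q * a - β) / 2
  have hε : 0 < ε := by simp only [ε]; linarith
  have hdefect : ∀ᶠ r in atTop, ε ≤ r ^ 2 * riccatiDefect q β a r :=
    (tendsto_sq_mul_riccatiDefect q β a).eventually
      (eventually_ge_nhds (by simp only [ε]; linarith))
  have hG := eventually_nonpos_of_hasDerivAt_le_neg_one
    (G := fun r => -((h' r - (q - a / r ^ 2) * h r) * exp (q * r + a / r)))
    (by filter_upwards [hh, hh', eventually_ne_atTop 0] with r hhr hh'r hr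
        exact (hasDerivAt_barrier hr hhr hh'r).neg)
    (by filter_upwards [hdefect, eventually_one_le_div_sq_mul_exp hq ha hε hge, hge,
          eventually_gt_atTop 0] with r hP hgrowth hhr hr
        have hP' : ε / r ^ 2 ≤ riccatiDefect q β a r := by
          rw [div_le_iff₀ (by positivity)]; linarith
        have := mul_le_mul_of_nonneg_right hP'
          (mul_nonneg (hr.le.trans hhr) (exp_pos (q * r + a / r)).le)
        linarith)
  filter_upwards [hG] with r hr
  linarith [nonneg_of_mul_nonneg_left (neg_nonpos.1 hr) (exp_pos _)]

theorem tendsto_sq_mul_div_sub {h h' : ℝ → ℝ} {q β : ℝ} (hq : 0 < q) (hβ : 0 < β)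
    (hh : ∀ᶠ r in atTop, HasDerivAt h (h' r) r)
    (hh' : ∀ᶠ r in atTop, HasDerivAt h' ((q ^ 2 - β / r ^ 2) * h r) r)
    (hge : ∀ᶠ r in atTop, r ≤ h r) :
    Tendsto (fun r => r ^ 2 * (h' r / h r - q)) atTop (𝓝 (-(β / (2 * q)))) := by
  have hβq : 0 < β / (2 * q) := by positivity
  have hsq : ∀ r a : ℝ, r ≠ 0 → r ^ 2 * (q - a / r ^ 2 - q) = -a := fun r a hr => by
    field_simp; ring
  rw [tendsto_order]
  constructor
  · intro l hl
    obtain ⟨a, hβa, hal⟩ := exists_between (lt_neg.1 hl)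
    have hqa : β < 2 * q * a := by rw [div_lt_iff₀ (by positivity)] at hβa; linarith
    filter_upwards [eventually_le_deriv_of_lt_two_mul hq (hβq.trans hβa).le hqa hh hh' hge, hge,
      eventually_gt_atTop 0] with r hr hhr hr0
    have := mul_le_mul_of_nonneg_left
      (sub_le_sub_right ((le_div_iff₀ (hr0.trans_le hhr)).2 hr) q) (sq_nonneg r)
    linarith [hsq r a hr0.ne']
  · intro u hu
    obtain ⟨a, hua, haβ⟩ := exists_between (max_lt (neg_lt.1 hu) hβq)
    have hqa : 2 * q * a < β := by rw [lt_div_iff₀ (by positivity)] at haβ; linarith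
    filter_upwards [eventually_deriv_le_of_two_mul_lt hq ((le_max_right _ _).trans hua.le) hqa
      hh hh' hge, hge, eventually_gt_atTop 0] with r hr hhr hr0
    have := mul_le_mul_of_nonneg_left
      (sub_le_sub_right ((div_le_iff₀ (hr0.trans_le hhr)).2 hr) q) (sq_nonneg r)
    linarith [hsq r a hr0.ne', le_max_left (-u) 0]

theorem Filter.Tendsto.sq_mul_sq_sub {A : ℝ → ℝ} {q L : ℝ}
    (hA : Tendsto (fun r => r ^ 2 * (A r - q)) atTop (𝓝 L)) :
    Tendsto (fun r => r ^ 2 * (A r ^ 2 - q ^ 2)) atTop (𝓝 (L * (2 * q))) := by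
  have hAq : Tendsto A atTop (𝓝 q) := by
    have := (hA.mul (tendsto_inv_atTop_zero.pow 2)).const_add q
    rw [zero_pow two_ne_zero, mul_zero, add_zero] at this
    refine this.congr' ?_
    filter_upwards [eventually_ne_atTop 0] with r hr
    field_simp
    ring
  have := hA.mul (hAq.add_const q)
  rw [← two_mul] at this
  exact this.congr fun r => by ring

theorem tendsto_sq_mul_div_sq_sub {K h h' h'' : ℝ → ℝ} {κ β R₀ : ℝ} (hκ : 0 < κ) (hβ : 0 < β)
    (hK_nonpos : ∀ r ∈ Ici (0 : ℝ), K r ≤ 0)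
    (hK_eq : ∀ r ≥ R₀, K r = -κ + β / r ^ 2)
    (hh' : ∀ r ∈ Ici (0 : ℝ), HasDerivWithinAt h (h' r) (Ici 0) r)
    (hh'' : ∀ r ∈ Ici (0 : ℝ), HasDerivWithinAt h' (h'' r) (Ici 0) r)
    (hODE : ∀ r ∈ Ici (0 : ℝ), h'' r + K r * h r = 0)
    (hh0 : h 0 = 0) (hh'0 : h' 0 = 1) :
    Tendsto (fun r => r ^ 2 * ((h' r / h r) ^ 2 - κ)) atTop (𝓝 (-β)) := by
  have hge : ∀ᶠ r in atTop, r ≤ h r := by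
    filter_upwards [eventually_ge_atTop 0] with r hr
    exact self_le_of_deriv2_add_mul_eq_zero hK_nonpos hh' hh'' hODE hh0 hh'0 r hr
  have hh_at : ∀ᶠ r in atTop, HasDerivAt h (h' r) r := by
    filter_upwards [eventually_gt_atTop 0] with r hr
    exact (hh' r hr.le).hasDerivAt (Ici_mem_nhds hr)
  have hh'_at : ∀ᶠ r in atTop, HasDerivAt h' ((√κ ^ 2 - β / r ^ 2) * h r) r := by
    filter_upwards [eventually_gt_atTop 0, eventually_ge_atTop R₀] with r hr hR
    have := hODE r hr.le
    rw [hK_eq r hR] at this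
    exact (hh'' r hr.le).hasDerivAt (Ici_mem_nhds hr) |>.congr_deriv (by
      rw [sq_sqrt hκ.le]; linarith)
  have := (tendsto_sq_mul_div_sub (sqrt_pos.2 hκ) hβ hh_at hh'_at hge).sq_mul_sq_sub
  rwa [sq_sqrt hκ.le, neg_mul, div_mul_cancel₀ _ (by positivity)] at this

theorem eventually_le_of_tendsto_sq_mul_sq_sub {A : ℝ → ℝ} {d κ β : ℝ}
    (hA : Tendsto (fun r => r ^ 2 * (A r ^ 2 - κ)) atTop (𝓝 (-β)))
    (hdβ : (d - 1) ^ 2 * β < 1) :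
    ∀ᶠ r in atTop, (d - 1) ^ 2 * κ / 4 ≤
      1 / (4 * r ^ 2) + ((d - 1) * (d - 3) / 4) * A r ^ 2 - ((d - 1) / 2) * (-κ + β / r ^ 2) := by
  set c := (d - 1) * (d - 3) / 4
  have hlim : Tendsto (fun r => (1 - (d - 1) ^ 2 * β) / 4 + c * (r ^ 2 * (A r ^ 2 - κ) + β))
      atTop (𝓝 ((1 - (d - 1) ^ 2 * β) / 4)) := by
    simpa using (hA.add_const β).const_mul c |>.const_add ((1 - (d - 1) ^ 2 * β) / 4)
  filter_upwards [hlim.eventually (eventually_gt_nhds (by linarith : (0 : ℝ) < _)),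
    eventually_ne_atTop 0] with r hpos hr
  rw [← sub_nonneg]
  have : 1 / (4 * r ^ 2) + c * A r ^ 2 - (d - 1) / 2 * (-κ + β / r ^ 2) - (d - 1) ^ 2 * κ / 4
      = ((1 - (d - 1) ^ 2 * β) / 4 + c * (r ^ 2 * (A r ^ 2 - κ) + β)) / r ^ 2 := by
    field_simp
    ring
  rw [this]
  exact div_nonneg hpos.le (sq_nonneg r)

theorem stmt_8_general (n : ℕ) (κ β R₀ : ℝ)
    (hκ : 0 < κ) (hβ : 0 < β) (hβn : β < 1 / ((n : ℝ) - 1) ^ 2)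
    (K h h' h'' : ℝ → ℝ)
    (hK_nonpos : ∀ r ∈ Ici (0 : ℝ), K r ≤ 0)
    (hK_eq : ∀ r ≥ R₀, K r = -κ + β / r ^ 2)
    (hh' : ∀ r ∈ Ici (0 : ℝ), HasDerivWithinAt h (h' r) (Ici 0) r)
    (hh'' : ∀ r ∈ Ici (0 : ℝ), HasDerivWithinAt h' (h'' r) (Ici 0) r)
    (hODE : ∀ r ∈ Ici (0 : ℝ), h'' r + K r * h r = 0)
    (hh0 : h 0 = 0) (hh'0 : h' 0 = 1)
    (A : ℝ → ℝ) (hA : ∀ r > (0 : ℝ), A r = h' r / h r) :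
    ∃ R₁ > R₀, ∀ r ≥ R₁,
      1 / (4 * r ^ 2) + (((n : ℝ) - 1) * ((n : ℝ) - 3) / 4) * (A r) ^ 2
          - (((n : ℝ) - 1) / 2) * K r
        ≥ ((n : ℝ) - 1) ^ 2 * κ / 4 := by
  have hA_lim : Tendsto (fun r => r ^ 2 * (A r ^ 2 - κ)) atTop (𝓝 (-β)) := by
    refine (tendsto_sq_mul_div_sq_sub hκ hβ hK_nonpos hK_eq hh' hh'' hODE hh0 hh'0).congr' ?_
    filter_upwards [eventually_gt_atTop 0] with r hr
    rw [hA r hr]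
  have hnβ : ((n : ℝ) - 1) ^ 2 * β < 1 := by
    rcases (sq_nonneg ((n : ℝ) - 1)).eq_or_lt with h0 | hpos
    · simp [← h0]
    · rw [lt_div_iff₀ hpos] at hβn; linarith
  obtain ⟨R, hR⟩ := eventually_atTop.1 (eventually_le_of_tendsto_sq_mul_sq_sub hA_lim hnβ)
  refine ⟨max R (R₀ + 1), by linarith [le_max_right R (R₀ + 1)], fun r hr => ?_⟩
  rw [hK_eq r (by linarith [le_max_right R (R₀ + 1)])]
  exact hR r (le_of_max_le_left hr)

/-- pointwise bound in the proof of Proposition 1.1 of the paper. Let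
`n ≥ 2`, `κ > 0`, `0 < β < 1/(n-1)²`, and let `K ≤ 0` be continuous on `[0,∞)` with
`K(r) = -κ + β/r²` for `r ≥ R₀` (where `R₀ > 0`, `R₀² ≥ β/κ`). Let `h` solve
`h'' + K·h = 0`, `h(0) = 0`, `h'(0) = 1`, and set `A = h'/h` on `(0,∞)`. Then there is
`R₁ > R₀` such that for all `r ≥ R₁`:
`1/(4r²) + ((n-1)(n-3)/4)·A(r)² - ((n-1)/2)·K(r) ≥ (n-1)²κ/4`. -/
theorem stmt_8 (n : ℕ) (hn : 2 ≤ n) (κ β R₀ : ℝ)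
    (hκ : 0 < κ) (hβ : 0 < β) (hβn : β < 1 / ((n : ℝ) - 1) ^ 2)
    (hR₀ : 0 < R₀) (hR₀β : R₀ ^ 2 ≥ β / κ)
    (K h h' h'' : ℝ → ℝ)
    (hK_cont : ContinuousOn K (Ici 0))
    (hK_nonpos : ∀ r ∈ Ici (0 : ℝ), K r ≤ 0)
    (hK_eq : ∀ r ≥ R₀, K r = -κ + β / r ^ 2)
    (hh' : ∀ r ∈ Ici (0 : ℝ), HasDerivWithinAt h (h' r) (Ici 0) r)
    (hh'' : ∀ r ∈ Ici (0 : ℝ), HasDerivWithinAt h' (h'' r) (Ici 0) r)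
    (hh''cont : ContinuousOn h'' (Ici 0))
    (hODE : ∀ r ∈ Ici (0 : ℝ), h'' r + K r * h r = 0)
    (hh0 : h 0 = 0) (hh'0 : h' 0 = 1)
    (A : ℝ → ℝ) (hA : ∀ r > (0 : ℝ), A r = h' r / h r) :
    ∃ R₁ > R₀, ∀ r ≥ R₁,
      1 / (4 * r ^ 2) + (((n : ℝ) - 1) * ((n : ℝ) - 3) / 4) * (A r) ^ 2
          - (((n : ℝ) - 1) / 2) * K r
        ≥ ((n : ℝ) - 1) ^ 2 * κ / 4 :=
  stmt_8_general n κ β R₀ hκ hβ hβn K h h' h'' hK_nonpos hK_eq hh' hh'' hODE hh0 hh'0 A hA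
end
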